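/- arXiv:1502.07431 — 11 statements merged into one kernel-verified Lean document; each statement's English description precedes it below -/
import Mathlib

section
/- Let 0 ≤ y_1 < y_2, and suppose a ∈ S(y_1), b ∈ S(y_2) with a > b. Then P(a) = P(b) = 0, u(y_1) = u(y_2) = 0, p_p(a) = p_p(b) = 0, and S(y_1) ⊆ S(y_2). -/
/-- If `0 ≤ y₁ < y₂`, `a ∈ S y₁`, `b ∈ S y₂` and `a > b`, then
`P a = P b = 0`, `u y₁ = u y₂ = 0`, `p_p a = p_p b = 0`, and `S y₁ ⊆ S y₂`.
Here `u y` is the supremum of the follower's payoff over bids `t ≥ 0` and `S y`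
is the set of bids `t ≥ 0` attaining that supremum. -/
theorem best_responses_sorted
    (p_w p_p P : ℝ → ℝ)
    (hpw0 : p_w 0 = 0) (hpp0 : p_p 0 = 0)
    (hpw_nonneg : ∀ t ∈ Set.Ici (0:ℝ), 0 ≤ p_w t)
    (hpp_nonneg : ∀ t ∈ Set.Ici (0:ℝ), 0 ≤ p_p t)
    (hpw_mono : MonotoneOn p_w (Set.Ici 0))
    (hpp_mono : MonotoneOn p_p (Set.Ici 0))
    (hsum_mono : StrictMonoOn (fun t => p_w t + p_p t) (Set.Ici 0))
    (hP_mono : MonotoneOn P (Set.Ici 0))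
    (hP_range : ∀ t ∈ Set.Ici (0:ℝ), P t ∈ Set.Icc (0:ℝ) 1)
    (U : ℝ → ℝ → ℝ)
    (hU : ∀ y t, U y t = (y - p_w t) * P t - p_p t)
    (u : ℝ → ℝ) (S : ℝ → Set ℝ)
    (hu_ub : ∀ y, ∀ t, 0 ≤ t → U y t ≤ u y)
    (hS : ∀ y t, t ∈ S y ↔ 0 ≤ t ∧ U y t = u y)
    (y₁ y₂ a b : ℝ) (hy₁ : 0 ≤ y₁) (hy : y₁ < y₂)
    (ha : a ∈ S y₁) (hb : b ∈ S y₂) (hab : b < a) :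
    P a = 0 ∧ P b = 0 ∧ u y₁ = 0 ∧ u y₂ = 0 ∧ p_p a = 0 ∧ p_p b = 0 ∧
    S y₁ ⊆ S y₂ := by
  obtain ⟨ha0, haU⟩ := (hS y₁ a).mp ha
  obtain ⟨hb0, hbU⟩ := (hS y₂ b).mp hb
  have haI : a ∈ Set.Ici (0:ℝ) := ha0
  have hbI : b ∈ Set.Ici (0:ℝ) := hb0
  have h1 : U y₁ b ≤ U y₁ a := haU ▸ hu_ub y₁ b hb0
  have h2 : U y₂ a ≤ U y₂ b := hbU ▸ hu_ub y₂ a ha0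
  rw [hU, hU] at h1 h2
  have hPab : P b ≤ P a := hP_mono hbI haI hab.le
  have hPeq : P a = P b := by nlinarith
  have hpwab : p_w b ≤ p_w a := hpw_mono hbI haI hab.le
  have hppab : p_p b ≤ p_p a := hpp_mono hbI haI hab.le
  have hPa0 : 0 ≤ P a := (hP_range a haI).1
  -- From h1 with P a = P b: (p_w a - p_w b) * P a + (p_p a - p_p b) ≤ 0
  have hkey : (p_w a - p_w b) * P a + (p_p a - p_p b) ≤ 0 := by
    have h1' := h1; rw [← hPeq] at h1'; nlinarith [h1']
  have hppeq : p_p a = p_p b := by nlinarith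
  have hsum : p_w b + p_p b < p_w a + p_p a := hsum_mono hbI haI hab
  have hpwlt : p_w b < p_w a := by linarith
  have hPa : P a = 0 := by nlinarith
  have hPb : P b = 0 := hPeq ▸ hPa
  have hP0 : 0 ≤ P 0 := (hP_range 0 (Set.mem_Ici.mpr le_rfl)).1
  have hu1a : u y₁ = -p_p a := by
    rw [← haU, hU, hPa]; ring
  have hu1lb : 0 ≤ u y₁ := by
    have := hu_ub y₁ 0 le_rfl
    rw [hU, hpw0, hpp0] at this
    nlinarith
  have hppa0 : 0 ≤ p_p a := hpp_nonneg a haI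
  have hppa : p_p a = 0 := by linarith
  have hppb : p_p b = 0 := by linarith [hppeq]
  have hu1 : u y₁ = 0 := by rw [hu1a, hppa]; ring
  have hu2 : u y₂ = 0 := by
    rw [← hbU, hU, hPb, hppb]; ring
  refine ⟨hPa, hPb, hu1, hu2, hppa, hppb, ?_⟩
  intro t ht
  obtain ⟨ht0, htU⟩ := (hS y₁ t).mp ht
  have hPt : 0 ≤ P t := (hP_range t ht0).1
  rw [hS]
  refine ⟨ht0, le_antisymm (hu_ub y₂ t ht0) ?_⟩
  have h3 : U y₂ t = U y₁ t + (y₂ - y₁) * P t := by rw [hU, hU]; ring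
  rw [hu2, h3, htU, hu1]
  nlinarith
end

section
/- For each fixed y ∈ [0,b_2], the function x ↦ eu(y,x) is weakly increasing and differentiable on (a_1,a_2), with ∂eu/∂x(y,x) = f_1(x)·(y − p_w(eu(y,x))) / (p_w'(eu(y,x))·F_1(x) + p_p'(eu(y,x))), and y − p_w(eu(y,x)) ≥ 0 for all such x. -/
/-!
Write `g a t = a * p_w t + p_p t`, so that `t = eu y x` solves `g (F₁ x) t = F₁ x * y - u y`.
As `p_w` and `p_p` are monotone and vanish at `0`, while `u y ≥ 0`, a solution has
`p_w t ≤ y`; raising the weight from `F₁ x₁` to `F₁ x₂` therefore raises `g · (eu y x₁)` by at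
most `(F₁ x₂ - F₁ x₁) * y`, the increase of the right-hand side, so `eu y` is monotone.
For the derivative at `x₀`, freeze the weight `a₀ = F₁ x₀`:
`g a₀ (eu y x) = g a₀ (eu y x₀) + (F₁ x - a₀) * (y - p_w (eu y x))`.
The last factor is locally bounded by monotonicity, so the right side tends to `g a₀ (eu y x₀)`,
which gives continuity of `eu y` through the order isomorphism `g a₀`. Then the right side is
differentiable at `x₀` with derivative `f₁ x₀ * (y - p_w (eu y x₀))`, and the inverse function
rule for `g a₀` finishes.
-/

open Filter Topology Set Function

theorem HasDerivAt.mul_of_left_eq_zero {𝕜 : Type*} [NontriviallyNormedField 𝕜] {F r : 𝕜 → 𝕜}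
    {x F' : 𝕜} (hF : HasDerivAt F F' x) (hF0 : F x = 0) (hr : ContinuousAt r x) :
    HasDerivAt (fun z => F z * r z) (F' * r x) x := by
  rw [hasDerivAt_iff_tendsto_slope] at hF ⊢
  refine (hF.mul (hr.tendsto.mono_left nhdsWithin_le_nhds)).congr' ?_
  filter_upwards with z
  simp only [slope_def_field, hF0, zero_mul, sub_zero]
  ring

theorem Homeomorph.hasDerivAt_of_comp {𝕜 : Type*} [NontriviallyNormedField 𝕜] (e : 𝕜 ≃ₜ 𝕜)
    {φ : 𝕜 → 𝕜} {x e' L : 𝕜} (he : HasDerivAt e e' (φ x)) (he' : e' ≠ 0)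
    (h : HasDerivAt (fun z => e (φ z)) L x) : HasDerivAt φ (e'⁻¹ * L) x := by
  have hsymm : HasDerivAt e.symm e'⁻¹ (e (φ x)) :=
    .of_local_left_inverse e.symm.continuous.continuousAt (by simpa using he) he'
      (.of_forall e.apply_symm_apply)
  simpa [Function.comp_def] using hsymm.comp x h

theorem AntitoneOn.isBoundedUnder_norm_nhds {α : Type*} [TopologicalSpace α] [LinearOrder α]
    [OrderTopology α] {f : α → ℝ} {s : Set α} {x : α} (hf : AntitoneOn f s) (hs : s ∈ 𝓝 x) :
    IsBoundedUnder (· ≤ ·) (𝓝 x) (norm ∘ f) := by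
  obtain ⟨b, c, hx, hbc, hsub⟩ := exists_Icc_mem_subset_of_mem_nhds hs
  have hb : b ∈ s := hsub ⟨le_rfl, hx.1.trans hx.2⟩
  have hc : c ∈ s := hsub ⟨hx.1.trans hx.2, le_rfl⟩
  refine isBoundedUnder_of_eventually_le (a := max ‖f c‖ ‖f b‖) ?_
  filter_upwards [hbc] with z hz
  exact abs_le_max_abs_abs (hf (hsub hz) hc hz.2) (hf hb (hsub hz) hz.1)

theorem mul_add_pos_of_add_pos {a w p : ℝ} (ha : 0 < a) (hw : 0 ≤ w) (hp : 0 ≤ p)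
    (hwp : 0 < w + p) : 0 < a * w + p := by
  rcases hp.eq_or_lt with rfl | hp
  · simpa using mul_pos ha (by simpa using hwp)
  · positivity

section WeightedPrice

variable {p_w p_p : ℝ → ℝ}

theorem strictMono_mul_add_of_hasDerivAt {p_w' p_p' : ℝ → ℝ}
    (hw : ∀ t, HasDerivAt p_w (p_w' t) t) (hp : ∀ t, HasDerivAt p_p (p_p' t) t)
    (hw' : ∀ t, 0 ≤ p_w' t) (hp' : ∀ t, 0 ≤ p_p' t) (hwp' : ∀ t, 0 < p_w' t + p_p' t)
    {a : ℝ} (ha : 0 < a) : StrictMono fun t => a * p_w t + p_p t :=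
  strictMono_of_hasDerivAt_pos (fun t => ((hw t).const_mul a).add (hp t))
    fun t => mul_add_pos_of_add_pos ha (hw' t) (hp' t) (hwp' t)

theorem le_of_mul_add_eq_mul_sub (hw : Monotone p_w) (hp : Monotone p_p) (hw0 : p_w 0 = 0)
    (hp0 : p_p 0 = 0) {a y k t : ℝ} (ha : 0 < a) (hy : 0 ≤ y) (hk : 0 ≤ k)
    (h : a * p_w t + p_p t = a * y - k) : p_w t ≤ y := by
  by_contra! hlt
  have ht : 0 < t := hw.reflect_lt (by rw [hw0]; linarith)
  have hpt : p_p 0 ≤ p_p t := hp ht.le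
  nlinarith

theorem monotoneOn_of_mul_add_eq_mul_sub {s : Set ℝ} {F φ : ℝ → ℝ} {y k : ℝ}
    (hF : MonotoneOn F s) (hg : ∀ x ∈ s, StrictMono fun t => F x * p_w t + p_p t)
    (hle : ∀ x ∈ s, p_w (φ x) ≤ y) (h : ∀ x ∈ s, F x * p_w (φ x) + p_p (φ x) = F x * y - k) :
    MonotoneOn φ s := by
  intro x₁ hx₁ x₂ hx₂ hx
  by_contra! hlt
  have hg_lt := hg x₂ hx₂ hlt
  nlinarith [mul_le_mul_of_nonneg_left (hle x₁ hx₁) (sub_nonneg.2 (hF hx₁ hx₂ hx)), h x₁ hx₁,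
    h x₂ hx₂]

theorem hasDerivAt_of_mul_add_eq_mul_sub {p_w' p_p' : ℝ} {s : Set ℝ} {F φ : ℝ → ℝ}
    {x f y k : ℝ} (hw_mono : Monotone p_w) (hw : HasDerivAt p_w p_w' (φ x))
    (hp : HasDerivAt p_p p_p' (φ x)) (hg_mono : StrictMono fun t => F x * p_w t + p_p t)
    (hg_surj : Surjective fun t => F x * p_w t + p_p t) (hg' : F x * p_w' + p_p' ≠ 0)
    (hF : HasDerivAt F f x) (hs : s ∈ 𝓝 x) (hφ : MonotoneOn φ s)
    (h : ∀ z ∈ s, F z * p_w (φ z) + p_p (φ z) = F z * y - k) :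
    HasDerivAt φ (f * (y - p_w (φ x)) / (p_w' * F x + p_p')) x := by
  let e := (hg_mono.orderIsoOfSurjective _ hg_surj).toHomeomorph
  have he : ∀ t, e t = F x * p_w t + p_p t := fun _ => rfl
  have hshift : ∀ᶠ z in 𝓝 x, e (φ z) = e (φ x) + (F z - F x) * (y - p_w (φ z)) := by
    filter_upwards [hs] with z hz
    rw [he, he]
    linear_combination h z hz - h x (mem_of_mem_nhds hs)
  have hsmall : Tendsto (fun z => (F z - F x) * (y - p_w (φ z))) (𝓝 x) (𝓝 0) := by
    have hr : AntitoneOn (fun z => y - p_w (φ z)) s := fun a ha b hb hab =>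
      sub_le_sub_left (hw_mono (hφ ha hb hab)) y
    refine Tendsto.zero_mul_isBoundedUnder_le ?_ (hr.isBoundedUnder_norm_nhds hs)
    simpa using hF.continuousAt.tendsto.sub_const (F x)
  have hcont : ContinuousAt φ x := by
    rw [← e.comp_continuousAt_iff]
    show Tendsto (fun z => e (φ z)) (𝓝 x) (𝓝 (e (φ x)))
    simpa using (hsmall.const_add (e (φ x))).congr' (hshift.mono fun z hz => hz.symm)
  have hderiv : HasDerivAt (fun z => e (φ z)) (f * (y - p_w (φ x))) x := by
    refine HasDerivAt.congr_of_eventuallyEq ?_ hshift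
    simpa using ((hF.sub_const (F x)).mul_of_left_eq_zero (sub_self _)
      (continuousAt_const.sub (hw.continuousAt.comp hcont))).const_add (e (φ x))
  have hφ' := e.hasDerivAt_of_comp ((hw.const_mul (F x)).add hp) hg' hderiv
  rwa [inv_mul_eq_div, mul_comm (F x)] at hφ'

end WeightedPrice

theorem eu_curve_monotone_differentiable_general
    (a1 a2 b2 : ℝ)
    (F1 f1 : ℝ → ℝ)
    (hF1_mono : Monotone F1)
    (hF1_range : ∀ x, F1 x ∈ Set.Icc (0:ℝ) 1)
    (hF1_pos : ∀ x ∈ Set.Ioc a1 a2, 0 < F1 x)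
    (hF1_deriv : ∀ x, HasDerivAt F1 (f1 x) x)
    (p_w p_p p_w' p_p' : ℝ → ℝ)
    (hpw : ∀ t, HasDerivAt p_w (p_w' t) t)
    (hpp : ∀ t, HasDerivAt p_p (p_p' t) t)
    (hpw'_nonneg : ∀ t, 0 ≤ p_w' t) (hpp'_nonneg : ∀ t, 0 ≤ p_p' t)
    (hsum_pos : ∀ t, 0 < p_w' t + p_p' t)
    (hpw0 : p_w 0 = 0) (hpp0 : p_p 0 = 0)
    (hbij : ∀ a ∈ Set.Ioc (0:ℝ) 1, Function.Bijective (fun t => a * p_w t + p_p t))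
    (u : ℝ → ℝ)
    (hu_nonneg : ∀ y ∈ Set.Icc (0:ℝ) b2, 0 ≤ u y)
    (eu : ℝ → ℝ → ℝ)
    (heu : ∀ y ∈ Set.Icc (0:ℝ) b2, ∀ x ∈ Set.Ioc a1 a2,
      u y = F1 x * y - p_w (eu y x) * F1 x - p_p (eu y x)) :
    ∀ y ∈ Set.Icc (0:ℝ) b2,
      MonotoneOn (fun x => eu y x) (Set.Ioo a1 a2) ∧
      ∀ x ∈ Set.Ioo a1 a2,
        HasDerivAt (fun x' => eu y x')
          (f1 x * (y - p_w (eu y x)) / (p_w' (eu y x) * F1 x + p_p' (eu y x))) x ∧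
        0 ≤ y - p_w (eu y x) := by
  intro y hy
  have hw_mono : Monotone p_w := monotone_of_hasDerivAt_nonneg hpw hpw'_nonneg
  have hp_mono : Monotone p_p := monotone_of_hasDerivAt_nonneg hpp hpp'_nonneg
  have hg : ∀ x ∈ Ioc a1 a2, StrictMono fun t => F1 x * p_w t + p_p t := fun x hx =>
    strictMono_mul_add_of_hasDerivAt hpw hpp hpw'_nonneg hpp'_nonneg hsum_pos (hF1_pos x hx)
  have heq : ∀ x ∈ Ioc a1 a2, F1 x * p_w (eu y x) + p_p (eu y x) = F1 x * y - u y :=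
    fun x hx => by linear_combination heu y hy x hx
  have hle : ∀ x ∈ Ioc a1 a2, p_w (eu y x) ≤ y := fun x hx =>
    le_of_mul_add_eq_mul_sub hw_mono hp_mono hpw0 hpp0 (hF1_pos x hx) hy.1 (hu_nonneg y hy)
      (heq x hx)
  have hmono : MonotoneOn (eu y) (Ioc a1 a2) :=
    monotoneOn_of_mul_add_eq_mul_sub (hF1_mono.monotoneOn _) hg hle heq
  refine ⟨hmono.mono Ioo_subset_Ioc_self, fun x hx => ?_⟩
  have hx' : x ∈ Ioc a1 a2 := Ioo_subset_Ioc_self hx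
  refine ⟨?_, sub_nonneg.2 (hle x hx')⟩
  exact hasDerivAt_of_mul_add_eq_mul_sub hw_mono (hpw _) (hpp _) (hg x hx')
    (hbij _ ⟨hF1_pos x hx', (hF1_range x).2⟩).2
    (mul_add_pos_of_add_pos (hF1_pos x hx') (hpw'_nonneg _) (hpp'_nonneg _) (hsum_pos _)).ne'
    (hF1_deriv x) (Ioc_mem_nhds hx.1 hx.2) hmono heq

/-- For each fixed `y ∈ [0,b₂]`, `x ↦ eu y x` is weakly increasing
and differentiable on `(a₁,a₂)`, with
`∂eu/∂x (y,x) = f₁ x · (y − p_w (eu y x)) / (p_w' (eu y x) · F₁ x + p_p' (eu y x))`,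
and `y − p_w (eu y x) ≥ 0` for all such `x`. -/
theorem eu_curve_monotone_differentiable
    (a1 a2 b2 : ℝ) (ha : a1 < a2) (hb2 : 0 < b2)
    (F1 f1 : ℝ → ℝ)
    (hF1_cont : Continuous F1) (hF1_mono : Monotone F1)
    (hF1_range : ∀ x, F1 x ∈ Set.Icc (0:ℝ) 1)
    (hF1_pos : ∀ x ∈ Set.Ioc a1 a2, 0 < F1 x)
    (hf1_cont : Continuous f1)
    (hf1_pos : ∀ x ∈ Set.Ioc a1 a2, 0 < f1 x)
    (hF1_deriv : ∀ x, HasDerivAt F1 (f1 x) x)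
    (p_w p_p p_w' p_p' : ℝ → ℝ)
    (hpw : ∀ t, HasDerivAt p_w (p_w' t) t)
    (hpp : ∀ t, HasDerivAt p_p (p_p' t) t)
    (hpw'_nonneg : ∀ t, 0 ≤ p_w' t) (hpp'_nonneg : ∀ t, 0 ≤ p_p' t)
    (hsum_pos : ∀ t, 0 < p_w' t + p_p' t)
    (hpw0 : p_w 0 = 0) (hpp0 : p_p 0 = 0)
    (hbij : ∀ a ∈ Set.Ioc (0:ℝ) 1, Function.Bijective (fun t => a * p_w t + p_p t))
    (u : ℝ → ℝ)
    (hu_cont : ContinuousOn u (Set.Icc 0 b2))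
    (hu_mono : MonotoneOn u (Set.Icc 0 b2))
    (hu_nonneg : ∀ y ∈ Set.Icc (0:ℝ) b2, 0 ≤ u y)
    (hu0 : u 0 = 0)
    (eu : ℝ → ℝ → ℝ)
    (heu : ∀ y ∈ Set.Icc (0:ℝ) b2, ∀ x ∈ Set.Ioc a1 a2,
      u y = F1 x * y - p_w (eu y x) * F1 x - p_p (eu y x)) :
    ∀ y ∈ Set.Icc (0:ℝ) b2,
      MonotoneOn (fun x => eu y x) (Set.Ioo a1 a2) ∧
      ∀ x ∈ Set.Ioo a1 a2,
        HasDerivAt (fun x' => eu y x')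
          (f1 x * (y - p_w (eu y x)) / (p_w' (eu y x) * F1 x + p_p' (eu y x))) x ∧
        0 ≤ y - p_w (eu y x) :=
  eu_curve_monotone_differentiable_general a1 a2 b2 F1 f1 hF1_mono hF1_range hF1_pos hF1_deriv p_w
    p_p p_w' p_p' hpw hpp hpw'_nonneg hpp'_nonneg hsum_pos hpw0 hpp0 hbij u hu_nonneg eu heu
end

section
/- For each fixed x ∈ (a_1,a_2], the function y ↦ eu(y,x) is continuous on [0,b_2]. -/
/-- For each fixed `x ∈ (a₁,a₂]`, the function `y ↦ eu y x` is
continuous on `[0,b₂]`. -/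
theorem eu_curve_continuous_in_y
    (a1 a2 b2 : ℝ) (ha : a1 < a2) (hb2 : 0 < b2)
    (F1 : ℝ → ℝ)
    (hF1_cont : Continuous F1) (hF1_mono : Monotone F1)
    (hF1_range : ∀ x, F1 x ∈ Set.Icc (0:ℝ) 1)
    (hF1_pos : ∀ x ∈ Set.Ioc a1 a2, 0 < F1 x)
    (p_w p_p p_w' p_p' : ℝ → ℝ)
    (hpw : ∀ t, HasDerivAt p_w (p_w' t) t)
    (hpp : ∀ t, HasDerivAt p_p (p_p' t) t)
    (hpw'_nonneg : ∀ t, 0 ≤ p_w' t) (hpp'_nonneg : ∀ t, 0 ≤ p_p' t)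
    (hsum_pos : ∀ t, 0 < p_w' t + p_p' t)
    (hpw0 : p_w 0 = 0) (hpp0 : p_p 0 = 0)
    (hbij : ∀ a ∈ Set.Ioc (0:ℝ) 1, Function.Bijective (fun t => a * p_w t + p_p t))
    (u : ℝ → ℝ)
    (hu_cont : ContinuousOn u (Set.Icc 0 b2))
    (hu_mono : MonotoneOn u (Set.Icc 0 b2))
    (hu_nonneg : ∀ y ∈ Set.Icc (0:ℝ) b2, 0 ≤ u y)
    (hu0 : u 0 = 0)
    (eu : ℝ → ℝ → ℝ)
    (heu : ∀ y ∈ Set.Icc (0:ℝ) b2, ∀ x ∈ Set.Ioc a1 a2,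
      u y = F1 x * y - p_w (eu y x) * F1 x - p_p (eu y x)) :
    ∀ x ∈ Set.Ioc a1 a2, ContinuousOn (fun y => eu y x) (Set.Icc 0 b2) := by
  intro x hx
  set a := F1 x with haa
  have ha0 : 0 < a := hF1_pos x hx
  have ha1 : a ≤ 1 := (hF1_range x).2
  have hsurj : Function.Surjective (fun t => a * p_w t + p_p t) :=
    (hbij a ⟨ha0, ha1⟩).2
  have hderiv : ∀ t, HasDerivAt (fun t => a * p_w t + p_p t) (a * p_w' t + p_p' t) t :=
    fun t => ((hpw t).const_mul a).add (hpp t)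
  have hpos : ∀ t, 0 < a * p_w' t + p_p' t := by
    intro t
    rcases (hpw'_nonneg t).lt_or_eq with h | h
    · have := mul_pos ha0 h
      linarith [hpp'_nonneg t]
    · have : 0 < p_p' t := by linarith [hsum_pos t]
      nlinarith
  have hmono : StrictMono (fun t => a * p_w t + p_p t) := by
    apply strictMono_of_deriv_pos
    intro t
    rw [(hderiv t).deriv]
    exact hpos t
  let e := StrictMono.orderIsoOfSurjective _ hmono hsurj
  have hcont_inv : Continuous (e.symm : ℝ → ℝ) := e.symm.continuous
  have key : ∀ y ∈ Set.Icc (0:ℝ) b2, eu y x = e.symm (a * y - u y) := by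
    intro y hy
    have h1 := heu y hy x hx
    have h2 : (fun t => a * p_w t + p_p t) (eu y x) = a * y - u y := by
      simp only []
      rw [← haa] at h1
      ring_nf
      ring_nf at h1
      linarith
    have : e (eu y x) = a * y - u y := h2
    rw [← this]
    exact (e.symm_apply_apply _).symm
  have hc : ContinuousOn (fun y => e.symm (a * y - u y)) (Set.Icc 0 b2) :=
    hcont_inv.comp_continuousOn (((continuous_const.mul continuous_id).continuousOn).sub hu_cont)
  exact hc.congr key
end

section
/- For every x ∈ (a_1,a_2] there exists y_0 ∈ [0,b_2] with s*(x) = eu(y_0,x); that is, the supremum defining s* is attained, so the point (x, s*(x)) lies on some equal-utility curve. -/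
/-- For every `x ∈ (a₁,a₂]` there exists `y₀ ∈ [0,b₂]` with
`s* x = eu y₀ x`: the supremum defining the smoothed strategy `s*` is attained,
i.e. `(x, s* x)` lies on some equal-utility curve. -/
theorem smoothed_strategy_on_eu_curve
    (a1 a2 b2 : ℝ) (ha : a1 < a2) (hb2 : 0 < b2)
    (F1 : ℝ → ℝ)
    (hF1_cont : Continuous F1) (hF1_mono : Monotone F1)
    (hF1_range : ∀ x, F1 x ∈ Set.Icc (0:ℝ) 1)
    (hF1_pos : ∀ x ∈ Set.Ioc a1 a2, 0 < F1 x)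
    (p_w p_p p_w' p_p' : ℝ → ℝ)
    (hpw : ∀ t, HasDerivAt p_w (p_w' t) t)
    (hpp : ∀ t, HasDerivAt p_p (p_p' t) t)
    (hpw'_nonneg : ∀ t, 0 ≤ p_w' t) (hpp'_nonneg : ∀ t, 0 ≤ p_p' t)
    (hsum_pos : ∀ t, 0 < p_w' t + p_p' t)
    (hpw0 : p_w 0 = 0) (hpp0 : p_p 0 = 0)
    (hbij : ∀ a ∈ Set.Ioc (0:ℝ) 1, Function.Bijective (fun t => a * p_w t + p_p t))
    (u : ℝ → ℝ)
    (hu_cont : ContinuousOn u (Set.Icc 0 b2))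
    (hu_mono : MonotoneOn u (Set.Icc 0 b2))
    (hu_nonneg : ∀ y ∈ Set.Icc (0:ℝ) b2, 0 ≤ u y)
    (hu0 : u 0 = 0)
    (eu : ℝ → ℝ → ℝ)
    (heu : ∀ y ∈ Set.Icc (0:ℝ) b2, ∀ x ∈ Set.Ioc a1 a2,
      u y = F1 x * y - p_w (eu y x) * F1 x - p_p (eu y x))
    (sStar : ℝ → ℝ)
    (hsStar : ∀ x ∈ Set.Ioc a1 a2,
      sStar x = sSup ((fun y => eu y x) '' Set.Icc (0:ℝ) b2)) :
    ∀ x ∈ Set.Ioc a1 a2, ∃ y0 ∈ Set.Icc (0:ℝ) b2, sStar x = eu y0 x := by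
  intro x hx
  have hFx : 0 < F1 x := hF1_pos x hx
  set g : ℝ → ℝ := fun t => F1 x * p_w t + p_p t with hg_def
  have hg_mono : StrictMono g := by
    apply strictMono_of_deriv_pos
    intro t
    have hd : HasDerivAt g (F1 x * p_w' t + p_p' t) t :=
      ((hpw t).const_mul (F1 x)).add (hpp t)
    rw [hd.deriv]
    rcases (lt_or_ge (p_w' t) (p_p' t + p_p' t)) with _ | _
    · have h1 : 0 < p_w' t + p_p' t := hsum_pos t
      rcases lt_or_eq_of_le (hpp'_nonneg t) with h2 | h2
      · have := mul_nonneg hFx.le (hpw'_nonneg t); linarith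
      · have h3 : 0 < p_w' t := by linarith
        have := mul_pos hFx h3
        linarith
    · have h3 : 0 < p_w' t := by
        have := hsum_pos t; have := hpp'_nonneg t; linarith
      have := mul_pos hFx h3
      have := hpp'_nonneg t
      linarith
  -- h y = F1 x * y - u y attains max on Icc
  have hIcc : IsCompact (Set.Icc (0:ℝ) b2) := isCompact_Icc
  have hne : (Set.Icc (0:ℝ) b2).Nonempty := Set.nonempty_Icc.mpr (le_of_lt hb2)
  have hcont : ContinuousOn (fun y => F1 x * y - u y) (Set.Icc 0 b2) :=
    (continuousOn_const.mul continuousOn_id).sub hu_cont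
  obtain ⟨y0, hy0, hy0max⟩ := hIcc.exists_isMaxOn hne hcont
  refine ⟨y0, hy0, ?_⟩
  have key : ∀ y ∈ Set.Icc (0:ℝ) b2, eu y x ≤ eu y0 x := by
    intro y hy
    have h1 := heu y hy x hx
    have h2 := heu y0 hy0 x hx
    have hg1 : g (eu y x) = F1 x * y - u y := by
      simp only [hg_def]; ring_nf; ring_nf at h1; linarith
    have hg2 : g (eu y0 x) = F1 x * y0 - u y0 := by
      simp only [hg_def]; ring_nf; ring_nf at h2; linarith
    have hle : g (eu y x) ≤ g (eu y0 x) := by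
      rw [hg1, hg2]; exact hy0max hy
    exact (hg_mono.le_iff_le).mp hle
  rw [hsStar x hx]
  apply le_antisymm
  · apply csSup_le ((hne.image _))
    rintro t ⟨y, hy, rfl⟩
    exact key y hy
  · apply le_csSup
    · exact ⟨eu y0 x, by rintro t ⟨y, hy, rfl⟩; exact key y hy⟩
    · exact ⟨y0, hy0, rfl⟩
end

section
/- Assume additionally that F_1 is strictly increasing on [a_1,a_2]. If a_1 < x_1 < x_2 ≤ a_2 and s*(x_1) = s*(x_2), then s*(x) = s*(x_2) for all x ∈ (a_1,x_2], and, setting y_1 = p_w(s*(x_2)), one has u(y_1) = 0, p_p(s*(x_2)) = 0, and eu(y_1,x) = s*(x_2) for all x ∈ (a_1,x_2]. Consequently s* is strictly increasing at every point x where s*(x) > lim_{t→a_1+} s*(t). -/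
/-- Assuming additionally that `F₁` is strictly increasing on
`[a₁,a₂]`: if `a₁ < x₁ < x₂ ≤ a₂` and `s* x₁ = s* x₂`, then `s*` is constant
equal to `s* x₂` on `(a₁,x₂]` and, setting `y₁ = p_w (s* x₂)`, one has
`u y₁ = 0`, `p_p (s* x₂) = 0`, and `eu y₁ x = s* x₂` on `(a₁,x₂]`.
Consequently `s*` is strictly increasing at every point where its value exceeds
the limit of `s*` at `a₁` from the right. -/
theorem smoothed_strategy_strictly_increasing
    (a1 a2 b2 : ℝ) (ha : a1 < a2) (hb2 : 0 < b2)
    (F1 : ℝ → ℝ)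
    (hF1_cont : Continuous F1) (hF1_mono : Monotone F1)
    (hF1_range : ∀ x, F1 x ∈ Set.Icc (0:ℝ) 1)
    (hF1_pos : ∀ x ∈ Set.Ioc a1 a2, 0 < F1 x)
    (p_w p_p p_w' p_p' : ℝ → ℝ)
    (hpw : ∀ t, HasDerivAt p_w (p_w' t) t)
    (hpp : ∀ t, HasDerivAt p_p (p_p' t) t)
    (hpw'_nonneg : ∀ t, 0 ≤ p_w' t) (hpp'_nonneg : ∀ t, 0 ≤ p_p' t)
    (hsum_pos : ∀ t, 0 < p_w' t + p_p' t)
    (hpw0 : p_w 0 = 0) (hpp0 : p_p 0 = 0)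
    (hbij : ∀ a ∈ Set.Ioc (0:ℝ) 1, Function.Bijective (fun t => a * p_w t + p_p t))
    (u : ℝ → ℝ)
    (hu_cont : ContinuousOn u (Set.Icc 0 b2))
    (hu_mono : MonotoneOn u (Set.Icc 0 b2))
    (hu_nonneg : ∀ y ∈ Set.Icc (0:ℝ) b2, 0 ≤ u y)
    (hu0 : u 0 = 0)
    (eu : ℝ → ℝ → ℝ)
    (heu : ∀ y ∈ Set.Icc (0:ℝ) b2, ∀ x ∈ Set.Ioc a1 a2,
      u y = F1 x * y - p_w (eu y x) * F1 x - p_p (eu y x))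
    (hF1_strict : StrictMonoOn F1 (Set.Icc a1 a2))
    (sStar : ℝ → ℝ)
    (hsStar : ∀ x ∈ Set.Ioc a1 a2,
      sStar x = sSup ((fun y => eu y x) '' Set.Icc (0:ℝ) b2)) :
    (∀ x1 x2 : ℝ, a1 < x1 → x1 < x2 → x2 ≤ a2 → sStar x1 = sStar x2 →
      (∀ x ∈ Set.Ioc a1 x2, sStar x = sStar x2) ∧
      u (p_w (sStar x2)) = 0 ∧
      p_p (sStar x2) = 0 ∧
      (∀ x ∈ Set.Ioc a1 x2, eu (p_w (sStar x2)) x = sStar x2)) ∧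
    (∀ L : ℝ, Filter.Tendsto sStar (nhdsWithin a1 (Set.Ioi a1)) (nhds L) →
      ∀ x1 x2 : ℝ, a1 < x1 → x1 < x2 → x2 ≤ a2 → L < sStar x1 →
        sStar x1 < sStar x2) := by
  -- basic monotonicity of p_w, p_p
  have hpw_mono : Monotone p_w :=
    monotone_of_deriv_nonneg (fun t => (hpw t).differentiableAt) (fun t => by
      rw [(hpw t).deriv]; exact hpw'_nonneg t)
  have hpp_mono : Monotone p_p :=
    monotone_of_deriv_nonneg (fun t => (hpp t).differentiableAt) (fun t => by
      rw [(hpp t).deriv]; exact hpp'_nonneg t)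
  have h0mem : (0:ℝ) ∈ Set.Icc (0:ℝ) b2 := ⟨le_rfl, hb2.le⟩
  -- G x is strictly monotone for x ∈ Ioc a1 a2
  have hGsm : ∀ x ∈ Set.Ioc a1 a2, StrictMono (fun t => F1 x * p_w t + p_p t) := by
    intro x hx
    have hpos := hF1_pos x hx
    have hmono : Monotone (fun t => F1 x * p_w t + p_p t) :=
      (hpw_mono.const_mul hpos.le).add hpp_mono
    exact hmono.strictMono_of_injective
      ((hbij (F1 x) ⟨hpos, (hF1_range x).2⟩).injective)
  -- the fundamental equation in G-form
  have hG : ∀ y ∈ Set.Icc (0:ℝ) b2, ∀ x ∈ Set.Ioc a1 a2,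
      F1 x * p_w (eu y x) + p_p (eu y x) = F1 x * y - u y := by
    intro y hy x hx
    have h := heu y hy x hx
    have h2 : p_w (eu y x) * F1 x = F1 x * p_w (eu y x) := mul_comm _ _
    linarith
  -- eu 0 x = 0
  have heu0 : ∀ x ∈ Set.Ioc a1 a2, eu 0 x = 0 := by
    intro x hx
    have h := hG 0 h0mem x hx
    apply (hGsm x hx).injective
    simp only [hpw0, hpp0, hu0] at h ⊢
    linarith
  -- maximizer of y ↦ F1 x * y - u y on [0,b2]
  have hmax : ∀ x, ∃ ys ∈ Set.Icc (0:ℝ) b2,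
      ∀ y ∈ Set.Icc (0:ℝ) b2, F1 x * y - u y ≤ F1 x * ys - u ys := by
    intro x
    have hcont : ContinuousOn (fun y => F1 x * y - u y) (Set.Icc 0 b2) :=
      ((continuous_const.mul continuous_id).continuousOn).sub hu_cont
    obtain ⟨ys, hys, hmax⟩ := isCompact_Icc.exists_isMaxOn ⟨0, h0mem⟩ hcont
    exact ⟨ys, hys, fun y hy => hmax hy⟩
  -- eu comparison via the equation
  have heu_le : ∀ x ∈ Set.Ioc a1 a2, ∀ y ∈ Set.Icc (0:ℝ) b2, ∀ y' ∈ Set.Icc (0:ℝ) b2,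
      F1 x * y - u y ≤ F1 x * y' - u y' → eu y x ≤ eu y' x := by
    intro x hx y hy y' hy' hle
    have h1 := hG y hy x hx
    have h2 := hG y' hy' x hx
    exact ((hGsm x hx).le_iff_le).mp (by linarith)
  -- sStar x = eu ys x for a maximizer ys
  have hkey : ∀ x ∈ Set.Ioc a1 a2, ∀ ys ∈ Set.Icc (0:ℝ) b2,
      (∀ y ∈ Set.Icc (0:ℝ) b2, F1 x * y - u y ≤ F1 x * ys - u ys) →
      sStar x = eu ys x := by
    intro x hx ys hys hm
    rw [hsStar x hx]
    apply IsGreatest.csSup_eq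
    constructor
    · exact ⟨ys, hys, rfl⟩
    · rintro t ⟨y, hy, rfl⟩
      exact heu_le x hx y hy ys hys (hm y hy)
  -- upper bound: eu y x ≤ sStar x
  have hub : ∀ x ∈ Set.Ioc a1 a2, ∀ y ∈ Set.Icc (0:ℝ) b2, eu y x ≤ sStar x := by
    intro x hx y hy
    obtain ⟨ys, hys, hm⟩ := hmax x
    rw [hkey x hx ys hys hm]
    exact heu_le x hx y hy ys hys (hm y hy)
  -- nonnegativity: 0 ≤ sStar x
  have hs_nonneg : ∀ x ∈ Set.Ioc a1 a2, 0 ≤ sStar x := by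
    intro x hx
    have := hub x hx 0 h0mem
    rw [heu0 x hx] at this; exact this
  -- key chain lemma: for x ≤ x', with ys a maximizer at x, eu ys x ≤ eu ys x'
  have hchain : ∀ x x', a1 < x → x ≤ x' → x' ≤ a2 →
      ∀ ys ∈ Set.Icc (0:ℝ) b2,
      (∀ y ∈ Set.Icc (0:ℝ) b2, F1 x * y - u y ≤ F1 x * ys - u ys) →
      eu ys x ≤ eu ys x' := by
    intro x x' hax hxx' hx'a ys hys hm
    have hxS : x ∈ Set.Ioc a1 a2 := ⟨hax, le_trans hxx' hx'a⟩
    have hx'S : x' ∈ Set.Ioc a1 a2 := ⟨lt_of_lt_of_le hax hxx', hx'a⟩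
    set t := eu ys x with ht
    -- t ≥ 0
    have ht0 : (0:ℝ) ≤ t := by
      have := heu_le x hxS 0 h0mem ys hys (by
        simpa [hu0] using hm 0 h0mem)
      rw [heu0 x hxS] at this; exact this
    have hGx : F1 x * p_w t + p_p t = F1 x * ys - u ys := hG ys hys x hxS
    have hGx' : F1 x' * p_w (eu ys x') + p_p (eu ys x') = F1 x' * ys - u ys :=
      hG ys hys x' hx'S
    have hppt : (0:ℝ) ≤ p_p t := by
      have := hpp_mono ht0; rw [hpp0] at this; exact this
    have huys : 0 ≤ u ys := hu_nonneg ys hys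
    have hF1pos : 0 < F1 x := hF1_pos x hxS
    -- ys ≥ p_w t
    have hyspw : p_w t ≤ ys := by nlinarith
    have hF1le : F1 x ≤ F1 x' := hF1_mono hxx'
    -- G_{x'} t ≤ G_{x'} (eu ys x')
    have : F1 x' * p_w t + p_p t ≤ F1 x' * p_w (eu ys x') + p_p (eu ys x') := by
      nlinarith
    exact ((hGsm x' hx'S).le_iff_le).mp (by linarith)
  -- monotonicity of sStar
  have hmonoS : ∀ x x', a1 < x → x ≤ x' → x' ≤ a2 → sStar x ≤ sStar x' := by
    intro x x' hax hxx' hx'a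
    have hxS : x ∈ Set.Ioc a1 a2 := ⟨hax, le_trans hxx' hx'a⟩
    have hx'S : x' ∈ Set.Ioc a1 a2 := ⟨lt_of_lt_of_le hax hxx', hx'a⟩
    obtain ⟨ys, hys, hm⟩ := hmax x
    rw [hkey x hxS ys hys hm]
    exact le_trans (hchain x x' hax hxx' hx'a ys hys hm) (hub x' hx'S ys hys)
  -- PART 1
  have part1 : ∀ x1 x2 : ℝ, a1 < x1 → x1 < x2 → x2 ≤ a2 → sStar x1 = sStar x2 →
      (∀ x ∈ Set.Ioc a1 x2, sStar x = sStar x2) ∧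
      u (p_w (sStar x2)) = 0 ∧
      p_p (sStar x2) = 0 ∧
      (∀ x ∈ Set.Ioc a1 x2, eu (p_w (sStar x2)) x = sStar x2) := by
    intro x1 x2 hax1 h12 h2a heqS
    have hx1S : x1 ∈ Set.Ioc a1 a2 := ⟨hax1, le_trans h12.le h2a⟩
    have hx2S : x2 ∈ Set.Ioc a1 a2 := ⟨lt_trans hax1 h12, h2a⟩
    obtain ⟨ys, hys, hm⟩ := hmax x1
    set S0 := sStar x2 with hS0
    have hS1 : eu ys x1 = S0 := by
      rw [← heqS]; exact (hkey x1 hx1S ys hys hm).symm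
    -- eu ys x2 = S0
    have hS2 : eu ys x2 = S0 := by
      have h1 : eu ys x1 ≤ eu ys x2 := hchain x1 x2 hax1 h12.le h2a ys hys hm
      have h2 : eu ys x2 ≤ S0 := hub x2 hx2S ys hys
      rw [hS1] at h1; linarith
    have hG1 : F1 x1 * p_w S0 + p_p S0 = F1 x1 * ys - u ys := by
      have := hG ys hys x1 hx1S; rw [hS1] at this; exact this
    have hG2 : F1 x2 * p_w S0 + p_p S0 = F1 x2 * ys - u ys := by
      have := hG ys hys x2 hx2S; rw [hS2] at this; exact this
    have hF1lt : F1 x1 < F1 x2 :=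
      hF1_strict ⟨hax1.le, le_trans h12.le h2a⟩ ⟨(lt_trans hax1 h12).le, h2a⟩ h12
    have hys_eq : ys = p_w S0 := by
      have h : (F1 x2 - F1 x1) * p_w S0 = (F1 x2 - F1 x1) * ys := by ring_nf; nlinarith
      have hne : F1 x2 - F1 x1 ≠ 0 := by linarith
      have := mul_left_cancel₀ hne h
      linarith
    have hS0nn : (0:ℝ) ≤ S0 := hs_nonneg x2 hx2S
    have hppS0 : (0:ℝ) ≤ p_p S0 := by
      have := hpp_mono hS0nn; rw [hpp0] at this; exact this
    have huys : 0 ≤ u ys := hu_nonneg ys hys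
    have hF1pos : 0 < F1 x1 := hF1_pos x1 hx1S
    have hzero : p_p S0 = 0 ∧ u ys = 0 := by
      constructor <;> nlinarith
    have hu_pwS0 : u (p_w S0) = 0 := by rw [← hys_eq]; exact hzero.2
    have hpwS0_mem : p_w S0 ∈ Set.Icc (0:ℝ) b2 := by rw [← hys_eq]; exact hys
    have heu_const : ∀ x ∈ Set.Ioc a1 x2, eu (p_w S0) x = S0 := by
      intro x hx
      have hxS : x ∈ Set.Ioc a1 a2 := ⟨hx.1, le_trans hx.2 h2a⟩
      have h := hG (p_w S0) hpwS0_mem x hxS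
      apply (hGsm x hxS).injective
      dsimp
      rw [h, hu_pwS0, hzero.1]
      ring
    refine ⟨?_, hu_pwS0, hzero.1, heu_const⟩
    intro x hx
    have hxS : x ∈ Set.Ioc a1 a2 := ⟨hx.1, le_trans hx.2 h2a⟩
    have hle : sStar x ≤ S0 := hmonoS x x2 hx.1 hx.2 h2a
    have hge : S0 ≤ sStar x := by
      rw [← heu_const x hx]
      exact hub x hxS (p_w S0) hpwS0_mem
    linarith
  refine ⟨part1, ?_⟩
  -- PART 2
  intro L hL x1 x2 hax1 h12 h2a hLlt
  by_contra hcon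
  push_neg at hcon
  have heqS : sStar x1 = sStar x2 :=
    le_antisymm (hmonoS x1 x2 hax1 h12.le h2a) hcon
  obtain ⟨hconst, -, -, -⟩ := part1 x1 x2 hax1 h12 h2a heqS
  -- sStar is eventually constant near a1 from the right
  have hev : sStar =ᶠ[nhdsWithin a1 (Set.Ioi a1)] (fun _ => sStar x2) := by
    filter_upwards [Ioo_mem_nhdsGT_of_mem (Set.left_mem_Ico.mpr (lt_trans hax1 h12))] with x hx
    exact hconst x ⟨hx.1, hx.2.le⟩
  have hL' : Filter.Tendsto (fun _ : ℝ => sStar x2) (nhdsWithin a1 (Set.Ioi a1)) (nhds L) :=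
    hL.congr' hev
  have huniq : sStar x2 = L := tendsto_nhds_unique tendsto_const_nhds hL'
  rw [heqS] at hLlt
  linarith
end

section
/- The smoothed strategy s* is continuous on (a_1,a_2]. -/
/-!
The equal-utility level `eu y x` is the solution `t` of `F₁(x) p_w(t) + p_p(t) = F₁(x) y - u(y)`.
The left side is strictly increasing in `t` and both sides are continuous in `(x, y)`, so the
solution depends continuously on `(x, y)`. A supremum over the compact interval `[0, b₂]` of a
jointly continuous function is continuous in the remaining variable.
-/

open Set Filter Topology

theorem strictMono_const_mul_add_of_hasDerivAt {f g f' g' : ℝ → ℝ} {a : ℝ} (ha : 0 < a)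
    (hf : ∀ t, HasDerivAt f (f' t) t) (hg : ∀ t, HasDerivAt g (g' t) t)
    (hf' : ∀ t, 0 ≤ f' t) (hg' : ∀ t, 0 ≤ g' t) (hpos : ∀ t, 0 < f' t + g' t) :
    StrictMono fun t => a * f t + g t := by
  refine strictMono_of_hasDerivAt_pos (fun t => ((hf t).const_mul a).add (hg t)) fun t => ?_
  rcases (hf' t).eq_or_lt with h | h
  · rw [← h, mul_zero, zero_add]; linarith [hpos t]
  · exact add_pos_of_pos_of_nonneg (mul_pos ha h) (hg' t)

theorem continuousOn_of_strictMono_of_apply_eq {X : Type*} [TopologicalSpace X] {s : Set X}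
    {G : X → ℝ → ℝ} {c e : X → ℝ} (hmono : ∀ p ∈ s, StrictMono (G p))
    (hG : ∀ t, ContinuousOn (fun p => G p t) s) (hc : ContinuousOn c s)
    (he : ∀ p ∈ s, G p (e p) = c p) : ContinuousOn e s := by
  intro p₀ hp₀
  have hGc : ∀ t, Tendsto (fun p => G p t - c p) (𝓝[s] p₀) (𝓝 (G p₀ t - c p₀)) :=
    fun t => ((hG t).sub hc p₀ hp₀).tendsto
  have hs : ∀ᶠ p in 𝓝[s] p₀, p ∈ s := self_mem_nhdsWithin
  refine tendsto_order.2 ⟨fun t ht => ?_, fun t ht => ?_⟩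
  · have hlt : G p₀ t - c p₀ < 0 := by
      rw [← he p₀ hp₀, sub_neg]; exact hmono p₀ hp₀ ht
    filter_upwards [(tendsto_order.1 (hGc t)).2 0 hlt, hs] with p hp hps
    rw [sub_neg, ← he p hps] at hp
    exact (hmono p hps).lt_iff_lt.1 hp
  · have hgt : 0 < G p₀ t - c p₀ := by
      rw [← he p₀ hp₀, sub_pos]; exact hmono p₀ hp₀ ht
    filter_upwards [(tendsto_order.1 (hGc t)).1 0 hgt, hs] with p hp hps
    rw [sub_pos, ← he p hps] at hp
    exact (hmono p hps).lt_iff_lt.1 hp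

theorem IsCompact.continuousOn_sSup_image {α β γ : Type*} [ConditionallyCompleteLinearOrder α]
    [TopologicalSpace α] [OrderTopology α] [TopologicalSpace β] [TopologicalSpace γ]
    {f : γ → β → α} {s : Set γ} {K : Set β} (hK : IsCompact K)
    (hf : ContinuousOn (Function.uncurry f) (s ×ˢ K)) :
    ContinuousOn (fun x => sSup (f x '' K)) s := by
  have : CompactSpace K := isCompact_iff_compactSpace.1 hK
  rw [continuousOn_iff_continuous_domRestrict]
  have hfK : Continuous fun q : s × K => f q.1 q.2 :=
    hf.comp_continuous (continuous_subtype_val.prodMap continuous_subtype_val)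
      fun q => ⟨q.1.2, q.2.2⟩
  convert isCompact_univ.continuous_sSup (f := fun (x : s) (y : K) => f x y) hfK using 2
  simp only [domRestrict_apply, image_univ]
  rw [image_eq_range]

theorem smoothed_strategy_continuous_general
    (a1 a2 b2 : ℝ)
    (F1 : ℝ → ℝ)
    (hF1_cont : Continuous F1)
    (hF1_pos : ∀ x ∈ Set.Ioc a1 a2, 0 < F1 x)
    (p_w p_p p_w' p_p' : ℝ → ℝ)
    (hpw : ∀ t, HasDerivAt p_w (p_w' t) t)
    (hpp : ∀ t, HasDerivAt p_p (p_p' t) t)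
    (hpw'_nonneg : ∀ t, 0 ≤ p_w' t) (hpp'_nonneg : ∀ t, 0 ≤ p_p' t)
    (hsum_pos : ∀ t, 0 < p_w' t + p_p' t)
    (u : ℝ → ℝ)
    (hu_cont : ContinuousOn u (Set.Icc 0 b2))
    (eu : ℝ → ℝ → ℝ)
    (heu : ∀ y ∈ Set.Icc (0:ℝ) b2, ∀ x ∈ Set.Ioc a1 a2,
      u y = F1 x * y - p_w (eu y x) * F1 x - p_p (eu y x))
    (sStar : ℝ → ℝ)
    (hsStar : ∀ x ∈ Set.Ioc a1 a2,
      sStar x = sSup ((fun y => eu y x) '' Set.Icc (0:ℝ) b2)) :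
    ContinuousOn sStar (Set.Ioc a1 a2) := by
  have heu_cont : ContinuousOn (fun q : ℝ × ℝ => eu q.2 q.1) (Ioc a1 a2 ×ˢ Icc 0 b2) := by
    refine continuousOn_of_strictMono_of_apply_eq (G := fun q t => F1 q.1 * p_w t + p_p t)
      (c := fun q => F1 q.1 * q.2 - u q.2)
      (fun q hq => strictMono_const_mul_add_of_hasDerivAt (hF1_pos q.1 hq.1) hpw hpp
        hpw'_nonneg hpp'_nonneg hsum_pos)
      (fun t => by fun_prop)
      (((hF1_cont.comp continuous_fst).mul continuous_snd).continuousOn.sub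
        (hu_cont.comp continuousOn_snd fun _ hq => hq.2))
      fun q hq => ?_
    linarith [heu q.2 hq.2 q.1 hq.1]
  exact (isCompact_Icc.continuousOn_sSup_image (f := fun x y => eu y x) heu_cont).congr hsStar

/-- The smoothed strategy `s*` is continuous on `(a₁,a₂]`. -/
theorem smoothed_strategy_continuous
    (a1 a2 b2 : ℝ) (ha : a1 < a2) (hb2 : 0 < b2)
    (F1 : ℝ → ℝ)
    (hF1_cont : Continuous F1) (hF1_mono : Monotone F1)
    (hF1_range : ∀ x, F1 x ∈ Set.Icc (0:ℝ) 1)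
    (hF1_pos : ∀ x ∈ Set.Ioc a1 a2, 0 < F1 x)
    (p_w p_p p_w' p_p' : ℝ → ℝ)
    (hpw : ∀ t, HasDerivAt p_w (p_w' t) t)
    (hpp : ∀ t, HasDerivAt p_p (p_p' t) t)
    (hpw'_nonneg : ∀ t, 0 ≤ p_w' t) (hpp'_nonneg : ∀ t, 0 ≤ p_p' t)
    (hsum_pos : ∀ t, 0 < p_w' t + p_p' t)
    (hpw0 : p_w 0 = 0) (hpp0 : p_p 0 = 0)
    (hbij : ∀ a ∈ Set.Ioc (0:ℝ) 1, Function.Bijective (fun t => a * p_w t + p_p t))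
    (u : ℝ → ℝ)
    (hu_cont : ContinuousOn u (Set.Icc 0 b2))
    (hu_mono : MonotoneOn u (Set.Icc 0 b2))
    (hu_nonneg : ∀ y ∈ Set.Icc (0:ℝ) b2, 0 ≤ u y)
    (hu0 : u 0 = 0)
    (eu : ℝ → ℝ → ℝ)
    (heu : ∀ y ∈ Set.Icc (0:ℝ) b2, ∀ x ∈ Set.Ioc a1 a2,
      u y = F1 x * y - p_w (eu y x) * F1 x - p_p (eu y x))
    (sStar : ℝ → ℝ)
    (hsStar : ∀ x ∈ Set.Ioc a1 a2,
      sStar x = sSup ((fun y => eu y x) '' Set.Icc (0:ℝ) b2)) :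
    ContinuousOn sStar (Set.Ioc a1 a2) :=
  smoothed_strategy_continuous_general a1 a2 b2 F1 hF1_cont hF1_pos p_w p_p p_w' p_p' hpw hpp
    hpw'_nonneg hpp'_nonneg hsum_pos u hu_cont eu heu sStar hsStar
end

section
/- For all x, t ∈ (a_1,a_2]: (g(x) − p_w(s_g(t)))·F_1(t) − p_p(s_g(t)) ≤ (g(x) − p_w(s_g(x)))·F_1(x) − p_p(s_g(x)). That is, against the committed bid schedule s_g, a follower with value g(x) who, by bidding s_g(t), wins with probability F_1(t), pays p_w on winning and p_p for participation, maximizes her payoff by bidding s_g(x). -/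
/-- For all `x, t ∈ (a₁,a₂]`:
`(g x − p_w (s_g t))·F₁ t − p_p (s_g t) ≤ (g x − p_w (s_g x))·F₁ x − p_p (s_g x)`,
i.e. against the committed schedule `s_g` a follower with value `g x` maximizes
her payoff by bidding `s_g x`. -/
theorem follower_best_response_at_own_value
    (a1 a2 b2 : ℝ) (ha : a1 < a2) (hb2 : 0 < b2)
    (f1 F1 : ℝ → ℝ)
    (hf1_cont : ContinuousOn f1 (Set.Icc a1 a2))
    (hf1_pos : ∀ x ∈ Set.Icc a1 a2, 0 < f1 x)
    (hf1_prob : (∫ t in a1..a2, f1 t) = 1)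
    (hF1 : ∀ x, F1 x = ∫ t in a1..x, f1 t)
    (p_w p_p p_w' p_p' : ℝ → ℝ)
    (hpw : ∀ t, HasDerivAt p_w (p_w' t) t)
    (hpp : ∀ t, HasDerivAt p_p (p_p' t) t)
    (hpw'_nonneg : ∀ t, 0 ≤ p_w' t) (hpp'_nonneg : ∀ t, 0 ≤ p_p' t)
    (hsum_pos : ∀ t, 0 < p_w' t + p_p' t)
    (hpw0 : p_w 0 = 0) (hpp0 : p_p 0 = 0)
    (hbij : ∀ a ∈ Set.Ioc (0:ℝ) 1, Function.Bijective (fun t => a * p_w t + p_p t))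
    (g : ℝ → ℝ)
    (hg_mono : MonotoneOn g (Set.Icc a1 a2))
    (hg_range : ∀ x ∈ Set.Icc a1 a2, g x ∈ Set.Icc (0:ℝ) b2)
    (sg : ℝ → ℝ)
    (hsg : ∀ x ∈ Set.Ioc a1 a2,
      (∫ t in a1..x, f1 t * g t) = p_w (sg x) * F1 x + p_p (sg x)) :
    ∀ x ∈ Set.Ioc a1 a2, ∀ t ∈ Set.Ioc a1 a2,
      (g x - p_w (sg t)) * F1 t - p_p (sg t) ≤
        (g x - p_w (sg x)) * F1 x - p_p (sg x) := by

  intro x hx t ht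
  have hxI : x ∈ Set.Icc a1 a2 := ⟨le_of_lt hx.1, hx.2⟩
  have htI : t ∈ Set.Icc a1 a2 := ⟨le_of_lt ht.1, ht.2⟩
  have ha1I : a1 ∈ Set.Icc a1 a2 := ⟨le_refl _, le_of_lt ha⟩
  have huIcc : ∀ c d : ℝ, c ∈ Set.Icc a1 a2 → d ∈ Set.Icc a1 a2 →
      Set.uIcc c d ⊆ Set.Icc a1 a2 := fun c d hc hd => Set.uIcc_subset_Icc hc hd
  have hint_f : ∀ c d : ℝ, c ∈ Set.Icc a1 a2 → d ∈ Set.Icc a1 a2 →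
      IntervalIntegrable f1 MeasureTheory.volume c d := fun c d hc hd =>
    (hf1_cont.mono (huIcc c d hc hd)).intervalIntegrable
  have hint_fg : ∀ c d : ℝ, c ∈ Set.Icc a1 a2 → d ∈ Set.Icc a1 a2 →
      IntervalIntegrable (fun s => f1 s * g s) MeasureTheory.volume c d := fun c d hc hd =>
    ((hg_mono.mono (huIcc c d hc hd)).intervalIntegrable).continuousOn_mul
      (hf1_cont.mono (huIcc c d hc hd))
  have key : g x * (∫ s in x..t, f1 s) ≤ ∫ s in x..t, f1 s * g s := by
    rcases le_total x t with hle | hle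
    · have hpt : ∀ s ∈ Set.Icc x t, g x * f1 s ≤ f1 s * g s := by
        intro s hs
        have hsI : s ∈ Set.Icc a1 a2 := ⟨le_trans hxI.1 hs.1, le_trans hs.2 htI.2⟩
        have hg : g x ≤ g s := hg_mono hxI hsI hs.1
        have hf : 0 ≤ f1 s := le_of_lt (hf1_pos s hsI)
        nlinarith
      have hmono := intervalIntegral.integral_mono_on hle
        ((hint_f x t hxI htI).const_mul (g x)) (hint_fg x t hxI htI) hpt
      calc g x * (∫ s in x..t, f1 s) = ∫ s in x..t, g x * f1 s := by
            rw [intervalIntegral.integral_const_mul]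
        _ ≤ ∫ s in x..t, f1 s * g s := hmono
    · have hpt : ∀ s ∈ Set.Icc t x, f1 s * g s ≤ g x * f1 s := by
        intro s hs
        have hsI : s ∈ Set.Icc a1 a2 := ⟨le_trans htI.1 hs.1, le_trans hs.2 hxI.2⟩
        have hg : g s ≤ g x := hg_mono hsI hxI hs.2
        have hf : 0 ≤ f1 s := le_of_lt (hf1_pos s hsI)
        nlinarith
      have hmono := intervalIntegral.integral_mono_on hle
        (hint_fg t x htI hxI) ((hint_f t x htI hxI).const_mul (g x)) hpt
      have hcm : (∫ s in t..x, g x * f1 s) = g x * ∫ s in t..x, f1 s :=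
        intervalIntegral.integral_const_mul _ _
      rw [show (∫ s in x..t, f1 s) = -(∫ s in t..x, f1 s) from
            intervalIntegral.integral_symm t x,
          show (∫ s in x..t, f1 s * g s) = -(∫ s in t..x, f1 s * g s) from
            intervalIntegral.integral_symm t x, mul_neg, neg_le_neg_iff]
      linarith [hmono, hcm]
  have h1 : (∫ s in a1..t, f1 s) = (∫ s in a1..x, f1 s) + ∫ s in x..t, f1 s :=
    (intervalIntegral.integral_add_adjacent_intervals (hint_f a1 x ha1I hxI)
      (hint_f x t hxI htI)).symm
  have h2 : (∫ s in a1..t, f1 s * g s) =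
      (∫ s in a1..x, f1 s * g s) + ∫ s in x..t, f1 s * g s :=
    (intervalIntegral.integral_add_adjacent_intervals (hint_fg a1 x ha1I hxI)
      (hint_fg x t hxI htI)).symm
  have hx' := hsg x hx
  have ht' := hsg t ht
  have e1 : (g x - p_w (sg t)) * F1 t - p_p (sg t)
      = g x * (∫ s in a1..t, f1 s) - (∫ s in a1..t, f1 s * g s) := by
    rw [hF1 t] at ht' ⊢
    linarith [ht', mul_sub_one (p_w (sg t)) (∫ s in a1..t, f1 s)]
  have e2 : (g x - p_w (sg x)) * F1 x - p_p (sg x)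
      = g x * (∫ s in a1..x, f1 s) - (∫ s in a1..x, f1 s * g s) := by
    rw [hF1 x] at hx' ⊢
    linarith [hx', mul_sub_one (p_w (sg x)) (∫ s in a1..x, f1 s)]
  rw [e1, e2, h1, h2, mul_add]
  linarith [key]
end

section
/- Define g̃(x) = g(x) if g(x) ≥ b_1 and g̃(x) = 0 otherwise. Then g̃ is weakly increasing, s_{g̃}(x) ≤ s_g(x) for all x ∈ (a_1,a_2], and u_A(g̃) ≥ u_A(g). Hence, in maximizing u_A, one may restrict attention to equal-bid functions taking values in {0} ∪ [b_1,b_2]. -/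
open MeasureTheory Set intervalIntegral

/-- For `c > 0`, `t ↦ p_w t * c + p_p t` is strictly monotone. -/
lemma aux_strictMono (p_w p_p p_w' p_p' : ℝ → ℝ)
    (hpw : ∀ t, HasDerivAt p_w (p_w' t) t)
    (hpp : ∀ t, HasDerivAt p_p (p_p' t) t)
    (hpw'_nonneg : ∀ t, 0 ≤ p_w' t) (hpp'_nonneg : ∀ t, 0 ≤ p_p' t)
    (hsum_pos : ∀ t, 0 < p_w' t + p_p' t)
    (c : ℝ) (hc : 0 < c) : StrictMono (fun t => p_w t * c + p_p t) := by
  apply strictMono_of_deriv_pos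
  intro t
  have hd : HasDerivAt (fun t => p_w t * c + p_p t) (p_w' t * c + p_p' t) t :=
    ((hpw t).mul_const c).add (hpp t)
  rw [hd.deriv]
  rcases (hpp'_nonneg t).lt_or_eq with h | h
  · have := mul_nonneg (hpw'_nonneg t) hc.le; linarith
  · have h1 : 0 < p_w' t := by have := hsum_pos t; linarith
    nlinarith

/-- Core properties of the induced commitment `sg`. -/
lemma aux_sg_props (a1 a2 : ℝ) (ha : a1 < a2)
    (f1 F1 : ℝ → ℝ)
    (hf1_cont : ContinuousOn f1 (Set.Icc a1 a2))
    (hf1_pos : ∀ x ∈ Set.Icc a1 a2, 0 < f1 x)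
    (hF1 : ∀ x, F1 x = ∫ t in a1..x, f1 t)
    (p_w p_p p_w' p_p' : ℝ → ℝ)
    (hpw : ∀ t, HasDerivAt p_w (p_w' t) t)
    (hpp : ∀ t, HasDerivAt p_p (p_p' t) t)
    (hpw'_nonneg : ∀ t, 0 ≤ p_w' t) (hpp'_nonneg : ∀ t, 0 ≤ p_p' t)
    (hsum_pos : ∀ t, 0 < p_w' t + p_p' t)
    (hpw0 : p_w 0 = 0) (hpp0 : p_p 0 = 0)
    (g : ℝ → ℝ) (hg_mono : MonotoneOn g (Set.Icc a1 a2))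
    (hg_nonneg : ∀ x ∈ Set.Icc a1 a2, 0 ≤ g x)
    (sg : ℝ → ℝ)
    (hsg : ∀ x ∈ Set.Ioc a1 a2,
      (∫ t in a1..x, f1 t * g t) = p_w (sg x) * F1 x + p_p (sg x)) :
    (∀ x ∈ Set.Ioc a1 a2, 0 ≤ sg x) ∧ MonotoneOn sg (Set.Ioc a1 a2) := by
  have hstrict := aux_strictMono p_w p_p p_w' p_p' hpw hpp hpw'_nonneg hpp'_nonneg hsum_pos
  have hsub : ∀ x ∈ Set.Icc a1 a2, ∀ y ∈ Set.Icc a1 a2, Set.uIcc x y ⊆ Set.Icc a1 a2 :=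
    fun x hx y hy => Set.uIcc_subset_Icc hx hy
  have hf1_int : ∀ x ∈ Set.Icc a1 a2, ∀ y ∈ Set.Icc a1 a2, IntervalIntegrable f1 volume x y :=
    fun x hx y hy => (hf1_cont.mono (hsub x hx y hy)).intervalIntegrable
  have hfg_int : ∀ x ∈ Set.Icc a1 a2, ∀ y ∈ Set.Icc a1 a2,
      IntervalIntegrable (fun t => f1 t * g t) volume x y := fun x hx y hy =>
    ((hg_mono.mono (hsub x hx y hy)).intervalIntegrable).continuousOn_mul
      (hf1_cont.mono (hsub x hx y hy))
  have ha1 : a1 ∈ Set.Icc a1 a2 := Set.left_mem_Icc.mpr ha.le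
  have ha2 : a2 ∈ Set.Icc a1 a2 := Set.right_mem_Icc.mpr ha.le
  have hF1pos : ∀ x ∈ Set.Ioc a1 a2, 0 < F1 x := by
    intro x hx
    have hxI : x ∈ Set.Icc a1 a2 := Set.Ioc_subset_Icc_self hx
    rw [hF1 x]
    exact intervalIntegral_pos_of_pos_on (hf1_int a1 ha1 x hxI)
      (fun t ht => hf1_pos t ⟨ht.1.le, ht.2.le.trans hx.2⟩) hx.1
  have hF1mono : ∀ x ∈ Set.Icc a1 a2, ∀ y ∈ Set.Icc a1 a2, x ≤ y → F1 x ≤ F1 y := by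
    intro x hx y hy hxy
    have hadd := integral_add_adjacent_intervals (hf1_int a1 ha1 x hx) (hf1_int x hx y hy)
    have hnn : (0:ℝ) ≤ ∫ t in x..y, f1 t :=
      intervalIntegral.integral_nonneg hxy
        (fun u hu => (hf1_pos u ⟨hx.1.trans hu.1, hu.2.trans hy.2⟩).le)
    rw [hF1 x, hF1 y]
    linarith [hadd]
  have hV_nonneg : ∀ x ∈ Set.Ioc a1 a2, (0:ℝ) ≤ ∫ t in a1..x, f1 t * g t := by
    intro x hx
    exact intervalIntegral.integral_nonneg hx.1.le (fun u hu =>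
      mul_nonneg (hf1_pos u ⟨hu.1, hu.2.trans hx.2⟩).le (hg_nonneg u ⟨hu.1, hu.2.trans hx.2⟩))
  have hsg_nonneg : ∀ x ∈ Set.Ioc a1 a2, 0 ≤ sg x := by
    intro x hx
    have hS := hstrict (F1 x) (hF1pos x hx)
    have h0 : (fun t => p_w t * F1 x + p_p t) 0 ≤ (fun t => p_w t * F1 x + p_p t) (sg x) := by
      simp only [hpw0, hpp0, zero_mul, add_zero, zero_add]
      rw [← hsg x hx]
      exact hV_nonneg x hx
    exact hS.le_iff_le.mp h0
  refine ⟨hsg_nonneg, ?_⟩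
  -- sg is monotone on (a1, a2]
  have hpw_sg_le_g : ∀ x ∈ Set.Ioc a1 a2, p_w (sg x) ≤ g x := by
    intro x hx
    have hxI : x ∈ Set.Icc a1 a2 := Set.Ioc_subset_Icc_self hx
    have hVle : (∫ t in a1..x, f1 t * g t) ≤ g x * F1 x := by
      have h1 : (∫ t in a1..x, f1 t * g t) ≤ ∫ t in a1..x, f1 t * g x := by
        apply intervalIntegral.integral_mono_on hx.1.le (hfg_int a1 ha1 x hxI)
          ((hf1_int a1 ha1 x hxI).mul_const (g x))
        intro u hu
        have huI : u ∈ Set.Icc a1 a2 := ⟨hu.1, hu.2.trans hx.2⟩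
        exact mul_le_mul_of_nonneg_left (hg_mono huI hxI hu.2) (hf1_pos u huI).le
      have h2 : (∫ t in a1..x, f1 t * g x) = g x * F1 x := by
        rw [intervalIntegral.integral_mul_const, hF1 x, mul_comm]
      linarith
    have hpp_nn : 0 ≤ p_p (sg x) := by
      rw [← hpp0]
      exact (monotone_of_deriv_nonneg (fun t => (hpp t).differentiableAt)
        (fun t => by rw [(hpp t).deriv]; exact hpp'_nonneg t)) (hsg_nonneg x hx)
    have heq := hsg x hx
    have hF1x := hF1pos x hx
    nlinarith [heq]
  intro x hx y hy hxy
  have hxI : x ∈ Set.Icc a1 a2 := Set.Ioc_subset_Icc_self hx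
  have hyI : y ∈ Set.Icc a1 a2 := Set.Ioc_subset_Icc_self hy
  have hS := hstrict (F1 y) (hF1pos y hy)
  apply hS.le_iff_le.mp
  show p_w (sg x) * F1 y + p_p (sg x) ≤ p_w (sg y) * F1 y + p_p (sg y)
  have hadd := integral_add_adjacent_intervals (hfg_int a1 ha1 x hxI) (hfg_int x hxI y hyI)
  have haddf := integral_add_adjacent_intervals (hf1_int a1 ha1 x hxI) (hf1_int x hxI y hyI)
  have hlow : g x * (F1 y - F1 x) ≤ ∫ t in x..y, f1 t * g t := by
    have h1 : (∫ t in x..y, f1 t * g x) ≤ ∫ t in x..y, f1 t * g t := by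
      apply intervalIntegral.integral_mono_on hxy ((hf1_int x hxI y hyI).mul_const (g x))
        (hfg_int x hxI y hyI)
      intro u hu
      have huI : u ∈ Set.Icc a1 a2 := ⟨hx.1.le.trans hu.1, hu.2.trans hy.2⟩
      exact mul_le_mul_of_nonneg_left (hg_mono hxI huI hu.1) (hf1_pos u huI).le
    have h2 : (∫ t in x..y, f1 t * g x) = g x * (F1 y - F1 x) := by
      rw [intervalIntegral.integral_mul_const, hF1 x, hF1 y, mul_comm]
      congr 1
      linarith [haddf]
    linarith
  have hF1le : F1 x ≤ F1 y := hF1mono x hxI y hyI hxy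
  have hkey : p_w (sg x) * (F1 y - F1 x) ≤ g x * (F1 y - F1 x) :=
    mul_le_mul_of_nonneg_right (hpw_sg_le_g x hx) (by linarith)
  have heqx := hsg x hx
  have heqy := hsg y hy
  nlinarith [hadd]

lemma aux_integrable (a1 a2 : ℝ) (ha : a1 < a2)
    (f1 : ℝ → ℝ) (hf1_cont : ContinuousOn f1 (Set.Icc a1 a2))
    (p_w p_p : ℝ → ℝ) (hpw_mono : Monotone p_w) (hpp_mono : Monotone p_p)
    (hpw0 : p_w 0 = 0) (hpp0 : p_p 0 = 0)
    (F2 : ℝ → ℝ) (hF2_mono : Monotone F2) (hF2_range : ∀ y, F2 y ∈ Set.Icc (0:ℝ) 1)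
    (g : ℝ → ℝ) (hg_mono : MonotoneOn g (Set.Icc a1 a2))
    (sg : ℝ → ℝ) (hsg_nonneg : ∀ x ∈ Set.Ioc a1 a2, 0 ≤ sg x)
    (hsg_mono : MonotoneOn sg (Set.Ioc a1 a2)) :
    IntervalIntegrable (fun x => ((x - p_w (sg x)) * F2 (g x) - p_p (sg x)) * f1 x)
      volume a1 a2 := by
  rw [intervalIntegrable_iff_integrableOn_Ioc_of_le ha.le]
  have hm1 : AEMeasurable (fun x => p_w (sg x)) (volume.restrict (Set.Ioc a1 a2)) :=
    aemeasurable_restrict_of_monotoneOn measurableSet_Ioc (hpw_mono.comp_monotoneOn hsg_mono)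
  have hm2 : AEMeasurable (fun x => p_p (sg x)) (volume.restrict (Set.Ioc a1 a2)) :=
    aemeasurable_restrict_of_monotoneOn measurableSet_Ioc (hpp_mono.comp_monotoneOn hsg_mono)
  have hm3 : AEMeasurable (fun x => F2 (g x)) (volume.restrict (Set.Ioc a1 a2)) :=
    aemeasurable_restrict_of_monotoneOn measurableSet_Ioc
      (hF2_mono.comp_monotoneOn (hg_mono.mono Set.Ioc_subset_Icc_self))
  have hmf1 : AEMeasurable f1 (volume.restrict (Set.Ioc a1 a2)) :=
    (hf1_cont.aemeasurable measurableSet_Icc).mono_measure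
      (Measure.restrict_mono Set.Ioc_subset_Icc_self le_rfl)
  have hmeas : AEStronglyMeasurable
      (fun x => ((x - p_w (sg x)) * F2 (g x) - p_p (sg x)) * f1 x)
      (volume.restrict (Set.Ioc a1 a2)) :=
    ((((aemeasurable_id.sub hm1).mul hm3).sub hm2).mul hmf1).aestronglyMeasurable
  obtain ⟨M, hM⟩ := IsCompact.exists_bound_of_continuousOn isCompact_Icc hf1_cont
  have hM0 : 0 ≤ M := (norm_nonneg _).trans (hM a1 (Set.left_mem_Icc.mpr ha.le))
  have ha2mem : a2 ∈ Set.Ioc a1 a2 := ⟨ha, le_refl a2⟩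
  have hPnn : 0 ≤ p_w (sg a2) := by rw [← hpw0]; exact hpw_mono (hsg_nonneg a2 ha2mem)
  have hRnn : 0 ≤ p_p (sg a2) := by rw [← hpp0]; exact hpp_mono (hsg_nonneg a2 ha2mem)
  set C : ℝ := (|a1| + |a2| + p_w (sg a2) + p_p (sg a2)) * M with hC
  refine Integrable.mono' (integrable_const C) hmeas ?_
  filter_upwards [ae_restrict_mem measurableSet_Ioc] with x hx
  have hxI : x ∈ Set.Icc a1 a2 := Set.Ioc_subset_Icc_self hx
  have hP1 : 0 ≤ p_w (sg x) := by rw [← hpw0]; exact hpw_mono (hsg_nonneg x hx)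
  have hP2 : p_w (sg x) ≤ p_w (sg a2) := hpw_mono (hsg_mono hx ha2mem hx.2)
  have hR1 : 0 ≤ p_p (sg x) := by rw [← hpp0]; exact hpp_mono (hsg_nonneg x hx)
  have hR2 : p_p (sg x) ≤ p_p (sg a2) := hpp_mono (hsg_mono hx ha2mem hx.2)
  have hQ := hF2_range (g x)
  have hxabs : |x| ≤ |a1| + |a2| := by
    rcases abs_le.mp (le_refl |a1|) with _
    have h1 : x ≤ |a2| := hx.2.trans (le_abs_self a2)
    have h2 : -( |a1| + |a2|) ≤ x := by
      have := neg_abs_le a1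
      have := abs_nonneg a2
      linarith [hx.1.le]
    rw [abs_le]
    constructor <;> [exact h2; linarith [abs_nonneg a1]]
  have hf1b : |f1 x| ≤ M := hM x hxI
  have hE : |(x - p_w (sg x)) * F2 (g x) - p_p (sg x)| ≤
      |a1| + |a2| + p_w (sg a2) + p_p (sg a2) := by
    have h1 : |(x - p_w (sg x)) * F2 (g x) - p_p (sg x)| ≤
        |(x - p_w (sg x)) * F2 (g x)| + |p_p (sg x)| := abs_sub _ _
    have h2 : |(x - p_w (sg x)) * F2 (g x)| = |x - p_w (sg x)| * |F2 (g x)| := abs_mul _ _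
    have h3 : |x - p_w (sg x)| ≤ |x| + |p_w (sg x)| := abs_sub _ _
    have h4 : |F2 (g x)| ≤ 1 := abs_le.mpr ⟨by linarith [hQ.1], hQ.2⟩
    have h5 : |p_w (sg x)| = p_w (sg x) := abs_of_nonneg hP1
    have h6 : |p_p (sg x)| = p_p (sg x) := abs_of_nonneg hR1
    have h7 : |x - p_w (sg x)| * |F2 (g x)| ≤ (|x| + p_w (sg x)) * 1 := by
      apply mul_le_mul (h3.trans (by rw [h5])) h4 (abs_nonneg _)
      positivity
    nlinarith
  calc ‖((x - p_w (sg x)) * F2 (g x) - p_p (sg x)) * f1 x‖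
      = |(x - p_w (sg x)) * F2 (g x) - p_p (sg x)| * |f1 x| := by
        rw [Real.norm_eq_abs, abs_mul]
    _ ≤ (|a1| + |a2| + p_w (sg a2) + p_p (sg a2)) * M := by
        apply mul_le_mul hE hf1b (abs_nonneg _)
        positivity
    _ = C := rfl



/-- With `g̃ x = g x` if `g x ≥ b₁` and `g̃ x = 0` otherwise:
`g̃` is weakly increasing, `s_{g̃} x ≤ s_g x` for all `x ∈ (a₁,a₂]`, and the
leader's expected utility satisfies `u_A(g̃) ≥ u_A(g)`. Hence one may restrict
attention to equal-bid functions with values in `{0} ∪ [b₁,b₂]`. -/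
theorem truncated_equal_bid_weakly_better
    (a1 a2 b2 : ℝ) (ha : a1 < a2) (hb2 : 0 < b2)
    (f1 F1 : ℝ → ℝ)
    (hf1_cont : ContinuousOn f1 (Set.Icc a1 a2))
    (hf1_pos : ∀ x ∈ Set.Icc a1 a2, 0 < f1 x)
    (hf1_prob : (∫ t in a1..a2, f1 t) = 1)
    (hF1 : ∀ x, F1 x = ∫ t in a1..x, f1 t)
    (p_w p_p p_w' p_p' : ℝ → ℝ)
    (hpw : ∀ t, HasDerivAt p_w (p_w' t) t)
    (hpp : ∀ t, HasDerivAt p_p (p_p' t) t)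
    (hpw'_nonneg : ∀ t, 0 ≤ p_w' t) (hpp'_nonneg : ∀ t, 0 ≤ p_p' t)
    (hsum_pos : ∀ t, 0 < p_w' t + p_p' t)
    (hpw0 : p_w 0 = 0) (hpp0 : p_p 0 = 0)
    (hbij : ∀ a ∈ Set.Ioc (0:ℝ) 1, Function.Bijective (fun t => a * p_w t + p_p t))
    (g : ℝ → ℝ)
    (hg_mono : MonotoneOn g (Set.Icc a1 a2))
    (hg_range : ∀ x ∈ Set.Icc a1 a2, g x ∈ Set.Icc (0:ℝ) b2)
    (sg : ℝ → ℝ)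
    (hsg : ∀ x ∈ Set.Ioc a1 a2,
      (∫ t in a1..x, f1 t * g t) = p_w (sg x) * F1 x + p_p (sg x))
    (b1 : ℝ) (hb1 : 0 ≤ b1) (hb1b2 : b1 ≤ b2)
    (F2 : ℝ → ℝ)
    (hF2_mono : Monotone F2)
    (hF2_range : ∀ y, F2 y ∈ Set.Icc (0:ℝ) 1)
    (hF2_zero : ∀ y : ℝ, y < b1 → F2 y = 0)
    (gTilde : ℝ → ℝ)
    (hgTilde : ∀ x, gTilde x = if b1 ≤ g x then g x else 0)
    (sgTilde : ℝ → ℝ)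
    (hsgTilde : ∀ x ∈ Set.Ioc a1 a2,
      (∫ t in a1..x, f1 t * gTilde t) = p_w (sgTilde x) * F1 x + p_p (sgTilde x)) :
    MonotoneOn gTilde (Set.Icc a1 a2) ∧
    (∀ x ∈ Set.Ioc a1 a2, sgTilde x ≤ sg x) ∧
    (∫ x in a1..a2, ((x - p_w (sg x)) * F2 (g x) - p_p (sg x)) * f1 x) ≤
      ∫ x in a1..a2, ((x - p_w (sgTilde x)) * F2 (gTilde x) - p_p (sgTilde x)) * f1 x := by
  have hpw_mono : Monotone p_w :=
    monotone_of_deriv_nonneg (fun t => (hpw t).differentiableAt)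
      (fun t => by rw [(hpw t).deriv]; exact hpw'_nonneg t)
  have hpp_mono : Monotone p_p :=
    monotone_of_deriv_nonneg (fun t => (hpp t).differentiableAt)
      (fun t => by rw [(hpp t).deriv]; exact hpp'_nonneg t)
  have hstrict := aux_strictMono p_w p_p p_w' p_p' hpw hpp hpw'_nonneg hpp'_nonneg hsum_pos
  -- monotonicity of gTilde
  have hgT_mono : MonotoneOn gTilde (Set.Icc a1 a2) := by
    intro x hx y hy hxy
    rw [hgTilde x, hgTilde y]
    by_cases h1 : b1 ≤ g x
    · have h2 : b1 ≤ g y := h1.trans (hg_mono hx hy hxy)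
      rw [if_pos h1, if_pos h2]
      exact hg_mono hx hy hxy
    · rw [if_neg h1]
      by_cases h2 : b1 ≤ g y
      · rw [if_pos h2]; exact hb1.trans h2
      · rw [if_neg h2]
  have hgT_nonneg : ∀ x ∈ Set.Icc a1 a2, 0 ≤ gTilde x := by
    intro x hx
    rw [hgTilde x]
    split_ifs with h
    · exact (hg_range x hx).1
    · exact le_refl 0
  have hg_nonneg : ∀ x ∈ Set.Icc a1 a2, 0 ≤ g x := fun x hx => (hg_range x hx).1
  -- sg properties
  obtain ⟨hsg_nonneg, hsg_mono⟩ := aux_sg_props a1 a2 ha f1 F1 hf1_cont hf1_pos hF1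
    p_w p_p p_w' p_p' hpw hpp hpw'_nonneg hpp'_nonneg hsum_pos hpw0 hpp0
    g hg_mono hg_nonneg sg hsg
  obtain ⟨hsgT_nonneg, hsgT_mono⟩ := aux_sg_props a1 a2 ha f1 F1 hf1_cont hf1_pos hF1
    p_w p_p p_w' p_p' hpw hpp hpw'_nonneg hpp'_nonneg hsum_pos hpw0 hpp0
    gTilde hgT_mono hgT_nonneg sgTilde hsgTilde
  -- F1 positivity
  have ha1 : a1 ∈ Set.Icc a1 a2 := Set.left_mem_Icc.mpr ha.le
  have hsub : ∀ x ∈ Set.Icc a1 a2, Set.uIcc a1 x ⊆ Set.Icc a1 a2 :=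
    fun x hx => Set.uIcc_subset_Icc ha1 hx
  have hf1_int : ∀ x ∈ Set.Icc a1 a2, IntervalIntegrable f1 volume a1 x :=
    fun x hx => (hf1_cont.mono (hsub x hx)).intervalIntegrable
  have hF1pos : ∀ x ∈ Set.Ioc a1 a2, 0 < F1 x := by
    intro x hx
    have hxI : x ∈ Set.Icc a1 a2 := Set.Ioc_subset_Icc_self hx
    rw [hF1 x]
    exact intervalIntegral_pos_of_pos_on (hf1_int x hxI)
      (fun t ht => hf1_pos t ⟨ht.1.le, ht.2.le.trans hx.2⟩) hx.1
  -- sgTilde ≤ sg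
  have hsgle : ∀ x ∈ Set.Ioc a1 a2, sgTilde x ≤ sg x := by
    intro x hx
    have hxI : x ∈ Set.Icc a1 a2 := Set.Ioc_subset_Icc_self hx
    have hfg_int : IntervalIntegrable (fun t => f1 t * g t) volume a1 x :=
      ((hg_mono.mono (hsub x hxI)).intervalIntegrable).continuousOn_mul
        (hf1_cont.mono (hsub x hxI))
    have hfgT_int : IntervalIntegrable (fun t => f1 t * gTilde t) volume a1 x :=
      ((hgT_mono.mono (hsub x hxI)).intervalIntegrable).continuousOn_mul
        (hf1_cont.mono (hsub x hxI))
    have hIle : (∫ t in a1..x, f1 t * gTilde t) ≤ ∫ t in a1..x, f1 t * g t := by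
      apply intervalIntegral.integral_mono_on hx.1.le hfgT_int hfg_int
      intro u hu
      have huI : u ∈ Set.Icc a1 a2 := ⟨hu.1, hu.2.trans hx.2⟩
      apply mul_le_mul_of_nonneg_left _ (hf1_pos u huI).le
      rw [hgTilde u]
      split_ifs with h
      · exact le_refl _
      · exact hg_nonneg u huI
    have hS := hstrict (F1 x) (hF1pos x hx)
    apply hS.le_iff_le.mp
    show p_w (sgTilde x) * F1 x + p_p (sgTilde x) ≤ p_w (sg x) * F1 x + p_p (sg x)
    rw [← hsg x hx, ← hsgTilde x hx]
    exact hIle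
  refine ⟨hgT_mono, hsgle, ?_⟩
  -- F2 agreement
  have hF2eq : ∀ x ∈ Set.Icc a1 a2, F2 (gTilde x) = F2 (g x) := by
    intro x hx
    rw [hgTilde x]
    split_ifs with h
    · rfl
    · push_neg at h
      rw [hF2_zero (g x) h, hF2_zero 0 (lt_of_le_of_lt (hg_nonneg x hx) h)]
  -- integrability of both integrands
  have hint1 := aux_integrable a1 a2 ha f1 hf1_cont p_w p_p hpw_mono hpp_mono hpw0 hpp0
    F2 hF2_mono hF2_range g hg_mono sg hsg_nonneg hsg_mono
  have hint2 := aux_integrable a1 a2 ha f1 hf1_cont p_w p_p hpw_mono hpp_mono hpw0 hpp0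
    F2 hF2_mono hF2_range gTilde hgT_mono sgTilde hsgT_nonneg hsgT_mono
  apply intervalIntegral.integral_mono_ae_restrict ha.le hint1 hint2
  rw [Measure.restrict_congr_set Ioc_ae_eq_Icc.symm]
  filter_upwards [ae_restrict_mem measurableSet_Ioc] with x hx
  have hxI : x ∈ Set.Icc a1 a2 := Set.Ioc_subset_Icc_self hx
  have h1 : p_w (sgTilde x) ≤ p_w (sg x) := hpw_mono (hsgle x hx)
  have h2 : p_p (sgTilde x) ≤ p_p (sg x) := hpp_mono (hsgle x hx)
  have h3 : 0 ≤ F2 (g x) := (hF2_range (g x)).1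
  have h4 : 0 ≤ f1 x := (hf1_pos x hxI).le
  rw [hF2eq x hxI]
  nlinarith [mul_nonneg (mul_nonneg (sub_nonneg.mpr h1) h3) h4,
    mul_nonneg (sub_nonneg.mpr h2) h4]
end

section
/- There is a unique t_0 ∈ (0,1) with t_0·e^{t_0} = 1 (equivalently t_0 = ∫_{t_0}^1 (1/x) dx), and ∫_{t_0}^1 (x − 1 + t_0/x) dx = t_0²/2 + t_0 − 1/2, which is strictly greater than 0.22 and in particular strictly greater than 1/6. -/
/-!
The map `t ↦ t eᵗ` increases strictly from `0` to `e` on `[0, 1]`, so it takes the value `1` exactly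
once there. At that point `log t₀ = -t₀`, so `∫_{t₀}^1 dx/x = -log t₀ = t₀` and the utility
integral becomes a polynomial in `t₀`. A Taylor bound gives `0.563 · e^{0.563} < 1`, whence `t₀ > 0.563` by monotonicity.
-/

open Real Set intervalIntegral

lemma strictMonoOn_mul_exp : StrictMonoOn (fun t : ℝ => t * exp t) (Ici 0) :=
  fun _ ha _ _ hab =>
    mul_lt_mul hab (exp_le_exp.2 hab.le) (exp_pos _) (le_of_lt (lt_of_le_of_lt ha hab))

lemma existsUnique_mul_exp_eq_one : ∃! t : ℝ, t ∈ Ioo (0 : ℝ) 1 ∧ t * exp t = 1 := by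
  have hcont : ContinuousOn (fun t : ℝ => t * exp t) (Icc 0 1) := by fun_prop
  have hval : (1 : ℝ) ∈ Ioo (0 * exp 0) (1 * exp 1) := by
    simp [one_lt_exp_iff]
  obtain ⟨t, ht, hte⟩ := intermediate_value_Ioo zero_le_one hcont hval
  refine ⟨t, ⟨ht, hte⟩, fun s ⟨hs, hse⟩ => ?_⟩
  exact strictMonoOn_mul_exp.injOn (le_of_lt hs.1) (le_of_lt ht.1) (hse.trans hte.symm)

lemma lt_of_mul_exp_lt_mul_exp {a t : ℝ} (ht : 0 ≤ t) (h : a * exp a < t * exp t) : a < t := by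
  by_contra! hta
  exact h.not_ge (strictMonoOn_mul_exp.monotoneOn ht (ht.trans hta) hta)

lemma log_eq_neg_of_mul_exp_eq_one {t : ℝ} (ht : 0 < t) (h : t * exp t = 1) : log t = -t := by
  have := congrArg log h
  rw [log_mul ht.ne' (exp_pos t).ne', log_exp, log_one] at this
  linarith

lemma integral_sub_one_add_div {a b : ℝ} (ha : 0 < a) (hb : 0 < b) (c : ℝ) :
    ∫ x in a..b, (x - 1 + c / x) = (b ^ 2 - a ^ 2) / 2 - (b - a) + c * log (b / a) := by
  have hdiv : IntervalIntegrable (fun x => c / x) MeasureTheory.volume a b := by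
    refine (continuousOn_const.div continuousOn_id fun x hx => ?_).intervalIntegrable
    exact ((lt_min ha hb).trans_le hx.1).ne'
  rw [integral_add (intervalIntegrable_id.sub intervalIntegrable_const) hdiv,
    integral_sub intervalIntegrable_id intervalIntegrable_const]
  simp only [← mul_one_div c, integral_const_mul, integral_one_div_of_pos ha hb, integral_id,
    integral_const, smul_eq_mul]
  ring

lemma exp_0563_lt : exp (0.563 : ℝ) < 1.7575 := by
  have h := exp_bound (x := 0.563) (by norm_num [abs_of_nonneg]) (n := 4) (by norm_num)
  rw [abs_le] at h
  norm_num [Finset.sum_range_succ, Nat.factorial, abs_of_nonneg] at h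
  linarith [h.2]

/-- There is a unique `t₀ ∈ (0,1)` with `t₀·e^{t₀} = 1`
(equivalently `t₀ = ∫_{t₀}^1 dx/x`), and the leader's optimal first-price
commitment utility `∫_{t₀}^1 (x − 1 + t₀/x) dx` equals `t₀²/2 + t₀ − 1/2`,
which is strictly greater than `0.22` and in particular greater than `1/6`. -/
theorem uniform_first_price_optimal_utility :
    (∃! t0 : ℝ, t0 ∈ Set.Ioo (0:ℝ) 1 ∧ t0 * Real.exp t0 = 1) ∧
    ∀ t0 ∈ Set.Ioo (0:ℝ) 1, t0 * Real.exp t0 = 1 →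
      t0 = (∫ x in t0..1, 1 / x) ∧
      (∫ x in t0..1, (x - 1 + t0 / x)) = t0 ^ 2 / 2 + t0 - 1 / 2 ∧
      (0.22 : ℝ) < t0 ^ 2 / 2 + t0 - 1 / 2 ∧
      (1 / 6 : ℝ) < t0 ^ 2 / 2 + t0 - 1 / 2 := by
  refine ⟨existsUnique_mul_exp_eq_one, fun t0 ⟨h0, _⟩ he => ?_⟩
  have hlog : log (1 / t0) = t0 := by
    rw [one_div, log_inv, log_eq_neg_of_mul_exp_eq_one h0 he, neg_neg]
  have hlb : 0.563 < t0 := lt_of_mul_exp_lt_mul_exp h0.le <| by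
    rw [he]
    nlinarith [exp_0563_lt]
  refine ⟨?_, ?_, by nlinarith, by nlinarith⟩
  · rw [integral_one_div_of_pos h0 one_pos, hlog]
  · rw [integral_sub_one_add_div h0 one_pos, hlog]
    ring
end

section
/- U is differentiable on (a_1,a_2) with U'(t) = f_1(t)·(b_2 − t − b_2·F_1(t)). Moreover the function t ↦ b_2 − t − b_2·F_1(t) is strictly decreasing on [a_1,a_2], positive at a_1 and negative at a_2, so there is a unique t_0 ∈ (a_1,a_2) with b_2 − t_0 − b_2·F_1(t_0) = 0, and U attains its maximum over [a_1,a_2] uniquely at t_0. -/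
open Set intervalIntegral

/-! `U' = f₁ · g` with `g t = b₂ - t - b₂ F₁ t`. Since `F₁` is strictly increasing, `g` is strictly
decreasing, from `g a₁ = b₂ - a₁ > 0` to `g a₂ = -a₂ < 0`; so `g` has a single zero `t₀`, and `U`
increases strictly on `[a₁, t₀]` and decreases strictly on `[t₀, a₂]`. -/

section Primitive

variable {f : ℝ → ℝ} {a b c : ℝ}

theorem continuousOn_integral_of_continuousOn (hf : ContinuousOn f (Icc a b))
    (hc : c ∈ Icc a b) : ContinuousOn (fun u => ∫ x in c..u, f x) (Icc a b) := by
  have hab : a ≤ b := hc.1.trans hc.2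
  rw [← uIcc_of_le hab] at hf hc ⊢
  exact continuousOn_primitive_interval' hf.intervalIntegrable hc

theorem hasDerivAt_integral_of_continuousOn (hf : ContinuousOn f (Icc a b))
    (hc : c ∈ Icc a b) {t : ℝ} (ht : t ∈ Ioo a b) :
    HasDerivAt (fun u => ∫ x in c..u, f x) (f t) t := by
  have hnhds : Icc a b ∈ nhds t := Icc_mem_nhds ht.1 ht.2
  exact integral_hasDerivAt_right
    (hf.mono (uIcc_subset_Icc hc (Ioo_subset_Icc_self ht))).intervalIntegrable
    ⟨Icc a b, hnhds, hf.aestronglyMeasurable measurableSet_Icc⟩ (hf.continuousAt hnhds)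

theorem strictMonoOn_integral_of_pos (hf : ContinuousOn f (Icc a b))
    (hpos : ∀ x ∈ Icc a b, 0 < f x) (hc : c ∈ Icc a b) :
    StrictMonoOn (fun u => ∫ x in c..u, f x) (Icc a b) :=
  strictMonoOn_of_hasDerivWithinAt_pos (convex_Icc a b)
    (continuousOn_integral_of_continuousOn hf hc)
    (fun t ht => by
      rw [interior_Icc] at ht ⊢
      exact (hasDerivAt_integral_of_continuousOn hf hc ht).hasDerivWithinAt)
    (fun t ht => hpos t (interior_subset ht))

end Primitive

theorem StrictAntiOn.existsUnique_eq_zero {g : ℝ → ℝ} {a b : ℝ} (hab : a ≤ b)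
    (hg : StrictAntiOn g (Icc a b)) (hgc : ContinuousOn g (Icc a b)) (ha : 0 < g a)
    (hb : g b < 0) : ∃! t, t ∈ Ioo a b ∧ g t = 0 := by
  obtain ⟨t, ht, hgt⟩ := intermediate_value_Ioo' hab hgc ⟨hb, ha⟩
  refine ⟨t, ⟨ht, hgt⟩, fun s ⟨hs, hgs⟩ => ?_⟩
  exact hg.injOn (Ioo_subset_Icc_self hs) (Ioo_subset_Icc_self ht) (hgs.trans hgt.symm)

theorem apply_lt_of_hasDerivAt_pos_of_neg {u u' : ℝ → ℝ} {a b c : ℝ} (hc : c ∈ Icc a b)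
    (hu : ContinuousOn u (Icc a b)) (hu' : ∀ x ∈ Ioo a b, HasDerivAt u (u' x) x)
    (hpos : ∀ x ∈ Ioo a c, 0 < u' x) (hneg : ∀ x ∈ Ioo c b, u' x < 0)
    {t : ℝ} (ht : t ∈ Icc a b) (htc : t ≠ c) : u t < u c := by
  rcases htc.lt_or_gt with hlt | hgt
  · have hmono : StrictMonoOn u (Icc a c) :=
      strictMonoOn_of_hasDerivWithinAt_pos (convex_Icc a c)
        (hu.mono (Icc_subset_Icc_right hc.2))
        (fun x hx => by
          rw [interior_Icc] at hx ⊢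
          exact (hu' x ⟨hx.1, hx.2.trans_le hc.2⟩).hasDerivWithinAt)
        (fun x hx => hpos x (by rwa [interior_Icc] at hx))
    exact hmono ⟨ht.1, hlt.le⟩ ⟨hc.1, le_rfl⟩ hlt
  · have hanti : StrictAntiOn u (Icc c b) :=
      strictAntiOn_of_hasDerivWithinAt_neg (convex_Icc c b)
        (hu.mono (Icc_subset_Icc_left hc.1))
        (fun x hx => by
          rw [interior_Icc] at hx ⊢
          exact (hu' x ⟨hc.1.trans_lt hx.1, hx.2⟩).hasDerivWithinAt)
        (fun x hx => hneg x (by rwa [interior_Icc] at hx))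
    exact hanti ⟨le_rfl, hc.2⟩ ⟨hgt.le, ht.2⟩ hgt

noncomputable def leaderUtility (b β : ℝ) (f F : ℝ → ℝ) (t : ℝ) : ℝ :=
  (∫ x in t..b, f x * (x - β * F x)) + β * F t * (1 - F t)

section LeaderUtility

variable {a b β : ℝ} {f F : ℝ → ℝ}

theorem leaderUtility_eq_neg_integral :
    leaderUtility b β f F =
      fun t => -(∫ x in b..t, f x * (x - β * F x)) + β * F t * (1 - F t) :=
  funext fun t => by rw [leaderUtility, integral_symm]

theorem continuousOn_leaderUtility (hab : a ≤ b) (hf : ContinuousOn f (Icc a b))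
    (hF : ContinuousOn F (Icc a b)) : ContinuousOn (leaderUtility b β f F) (Icc a b) := by
  rw [leaderUtility_eq_neg_integral]
  have hh : ContinuousOn (fun x => f x * (x - β * F x)) (Icc a b) := by fun_prop
  exact (continuousOn_integral_of_continuousOn hh (right_mem_Icc.2 hab)).neg.add (by fun_prop)

theorem hasDerivAt_leaderUtility (hf : ContinuousOn f (Icc a b))
    (hF : ContinuousOn F (Icc a b)) {t : ℝ} (ht : t ∈ Ioo a b) (hF' : HasDerivAt F (f t) t) :
    HasDerivAt (leaderUtility b β f F) (f t * (β - t - β * F t)) t := by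
  rw [leaderUtility_eq_neg_integral]
  have hh : ContinuousOn (fun x => f x * (x - β * F x)) (Icc a b) := by fun_prop
  have hb : b ∈ Icc a b := right_mem_Icc.2 (ht.1.trans ht.2).le
  exact ((hasDerivAt_integral_of_continuousOn hh hb ht).neg.add
    ((hF'.const_mul β).mul (hF'.const_sub 1))).congr_deriv (by ring)

end LeaderUtility

/-- The all-pay leader utility
`U t = ∫_t^{a₂} f₁ x·(x − b₂·F₁ x) dx + b₂·F₁ t·(1 − F₁ t)` is differentiable on
`(a₁,a₂)` with `U' t = f₁ t·(b₂ − t − b₂·F₁ t)`; the map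
`t ↦ b₂ − t − b₂·F₁ t` is strictly decreasing on `[a₁,a₂]`, positive at `a₁` and
negative at `a₂`, so there is a unique `t₀ ∈ (a₁,a₂)` with
`b₂ − t₀ − b₂·F₁ t₀ = 0`, and `U` attains its maximum over `[a₁,a₂]` uniquely
at `t₀`. -/
theorem all_pay_cutoff_optimal
    (a1 a2 b2 : ℝ) (ha1 : 0 ≤ a1) (ha : a1 < a2) (hb2a : a1 < b2) (hb2 : 0 < b2)
    (f1 F1 : ℝ → ℝ)
    (hf1_cont : ContinuousOn f1 (Set.Icc a1 a2))
    (hf1_pos : ∀ x ∈ Set.Icc a1 a2, 0 < f1 x)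
    (hF1 : ∀ x, F1 x = ∫ t in a1..x, f1 t)
    (hF1a2 : F1 a2 = 1)
    (U : ℝ → ℝ)
    (hUdef : ∀ t, U t = (∫ x in t..a2, f1 x * (x - b2 * F1 x)) + b2 * F1 t * (1 - F1 t)) :
    (∀ t ∈ Set.Ioo a1 a2, HasDerivAt U (f1 t * (b2 - t - b2 * F1 t)) t) ∧
    StrictAntiOn (fun t => b2 - t - b2 * F1 t) (Set.Icc a1 a2) ∧
    0 < b2 - a1 - b2 * F1 a1 ∧
    b2 - a2 - b2 * F1 a2 < 0 ∧
    (∃! t0 : ℝ, t0 ∈ Set.Ioo a1 a2 ∧ b2 - t0 - b2 * F1 t0 = 0) ∧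
    (∀ t0 ∈ Set.Ioo a1 a2, b2 - t0 - b2 * F1 t0 = 0 →
      ∀ t ∈ Set.Icc a1 a2, t ≠ t0 → U t < U t0) := by
  have ha1_mem : a1 ∈ Icc a1 a2 := left_mem_Icc.2 ha.le
  have hF1_eq : F1 = fun u => ∫ x in a1..u, f1 x := funext hF1
  have hF1_cont : ContinuousOn F1 (Icc a1 a2) :=
    hF1_eq ▸ continuousOn_integral_of_continuousOn hf1_cont ha1_mem
  have hF1_mono : StrictMonoOn F1 (Icc a1 a2) :=
    hF1_eq ▸ strictMonoOn_integral_of_pos hf1_cont hf1_pos ha1_mem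
  have hF1_deriv : ∀ t ∈ Ioo a1 a2, HasDerivAt F1 (f1 t) t :=
    hF1_eq ▸ fun t ht => hasDerivAt_integral_of_continuousOn hf1_cont ha1_mem ht
  have hU_eq : U = leaderUtility a2 b2 f1 F1 := funext hUdef
  have hU_deriv : ∀ t ∈ Ioo a1 a2, HasDerivAt U (f1 t * (b2 - t - b2 * F1 t)) t :=
    fun t ht => hU_eq ▸ hasDerivAt_leaderUtility hf1_cont hF1_cont ht (hF1_deriv t ht)
  have hg_anti : StrictAntiOn (fun t => b2 - t - b2 * F1 t) (Icc a1 a2) :=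
    fun x hx y hy hxy => by
      have := mul_lt_mul_of_pos_left (hF1_mono hx hy hxy) hb2
      simp only
      linarith
  have hg_a1 : 0 < b2 - a1 - b2 * F1 a1 := by simp [hF1, hb2a]
  have hg_a2 : b2 - a2 - b2 * F1 a2 < 0 := by rw [hF1a2]; linarith
  refine ⟨hU_deriv, hg_anti, hg_a1, hg_a2,
    hg_anti.existsUnique_eq_zero ha.le (by fun_prop) hg_a1 hg_a2, ?_⟩
  intro t0 ht0 hgt0 t ht htt0
  refine apply_lt_of_hasDerivAt_pos_of_neg (Ioo_subset_Icc_self ht0)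
    (hU_eq ▸ continuousOn_leaderUtility ha.le hf1_cont hF1_cont) hU_deriv
    (fun x hx => ?_) (fun x hx => ?_) ht htt0
  · have hx' : x ∈ Icc a1 a2 := ⟨hx.1.le, hx.2.le.trans ht0.2.le⟩
    exact mul_pos (hf1_pos x hx')
      (hgt0 ▸ hg_anti hx' (Ioo_subset_Icc_self ht0) hx.2)
  · have hx' : x ∈ Icc a1 a2 := ⟨ht0.1.le.trans hx.1.le, hx.2.le⟩
    exact mul_neg_of_pos_of_neg (hf1_pos x hx')
      (hgt0 ▸ hg_anti (Ioo_subset_Icc_self ht0) hx' hx.1)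
end

section
/- For every t_0 ∈ (1, 1.4) and every x ∈ (t_0, 2], the first-price commitment s(x) = (1/F_1(x))·∫_{t_0}^x 10·f_1(t) dt satisfies s(x) = 10·(x − t_0)/(x + 1), and in particular s(2) = 10·(2 − t_0)/3 > 2: at his highest possible value 2 the leader commits to a bid strictly above his value. -/
/-- With leader density `f₁ = 2/3` on `(0,1]` and `1/3` on
`(1,2]` (so `F₁ x = (x+1)/3` on `[1,2]`) and follower uniform on `[0,10]`:
for every `t₀ ∈ (1, 1.4)` and every `x ∈ (t₀, 2]`, the first-price commitment
`s x = (1/F₁ x)·∫_{t₀}^x 10·f₁ t dt` equals `10·(x − t₀)/(x + 1)`, and in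
particular `s 2 = 10·(2 − t₀)/3 > 2`: at his highest value `2` the leader
commits to a bid strictly above his value. -/
theorem leader_overbids_value
    (f1 F1 : ℝ → ℝ)
    (hf1 : ∀ x ∈ Set.Ioc (0:ℝ) 2, f1 x = if x ≤ 1 then 2/3 else 1/3)
    (hF1 : ∀ x ∈ Set.Icc (1:ℝ) 2, F1 x = (x + 1) / 3)
    (t0 : ℝ) (ht0 : t0 ∈ Set.Ioo (1:ℝ) 1.4)
    (s : ℝ → ℝ)
    (hs : ∀ x : ℝ, t0 < x → x ≤ 2 → s x = (1 / F1 x) * ∫ t in t0..x, 10 * f1 t) :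
    (∀ x : ℝ, t0 < x → x ≤ 2 → s x = 10 * (x - t0) / (x + 1)) ∧
    s 2 = 10 * (2 - t0) / 3 ∧ 2 < s 2 := by
  obtain ⟨ht1, ht14⟩ := ht0
  have key : ∀ x : ℝ, t0 < x → x ≤ 2 → s x = 10 * (x - t0) / (x + 1) := by
    intro x hx1 hx2
    have hx1' : (1:ℝ) < x := lt_trans ht1 hx1
    have hcongr : (∫ t in t0..x, 10 * f1 t) = ∫ t in t0..x, (10:ℝ)/3 := by
      apply intervalIntegral.integral_congr
      intro t ht
      rw [Set.uIcc_of_le (le_of_lt hx1)] at ht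
      have h1t : (1:ℝ) < t := lt_of_lt_of_le ht1 ht.1
      have ht2 : t ≤ 2 := le_trans ht.2 hx2
      simp only
      rw [hf1 t ⟨lt_trans one_pos h1t, ht2⟩, if_neg (not_le_of_gt h1t)]
      norm_num
    have hFx : F1 x = (x + 1) / 3 := hF1 x ⟨le_of_lt hx1', hx2⟩
    rw [hs x hx1 hx2, hcongr, hFx, intervalIntegral.integral_const]
    have hxne : x + 1 ≠ 0 := by linarith
    field_simp
    ring
  refine ⟨key, ?_, ?_⟩
  · have := key 2 (by linarith [show t0 < 1.4 from ht14]) le_rfl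
    rw [this]; norm_num
  · have := key 2 (by linarith [show t0 < 1.4 from ht14]) le_rfl
    rw [this]
    rw [show (2:ℝ) + 1 = 3 by norm_num]
    have : (10:ℝ) * (2 - t0) > 6 := by nlinarith [show t0 < 1.4 from ht14]
    linarith
end
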